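/- arXiv:2006.14757 — 4 statements merged into one kernel-verified Lean document; each statement's English description precedes it below -/
import Mathlib

section
/- For every n ≥ 0, (2α/h_n(t)) ∫_{-1}^{1} P_n(y,t)^2·w(y,t)/(1-y^2) dy = 2n+1+2α+R_n(t). Equivalently, (2t/h_n(t)) ∫_{-1}^{1} P_n(y,t)^2·w(y,t)/y^2 dy = -(2n+1+2α) + (2α/h_n(t)) ∫_{-1}^{1} P_n(y,t)^2·w(y,t)/(1-y^2) dy. -/
/-!
Write `W(x) = (1 - x²)^α e^{-t/x²}`, so that `x W'(x) = (2α - 2α/(1 - x²) + 2t/x²) W(x)` for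
`x ≠ 0`. The function `x P_n(x)² W(x)` vanishes at `±1`, so integrating its derivative over
`[-1, 1]` gives
`0 = (1 + 2α) h_n + 2 ∫ P_n (x P_n') W - 2α ∫ P_n² W/(1 - x²) + 2t ∫ P_n² W/x²`,
and `∫ P_n (x P_n') W = n h_n` because `x P_n' - n P_n` has degree `< n`.
All integrals converge: `W/x²` is continuous since `e^{-t/x²}` is flat at `0`, and
`W/(1 - x²) ≤ (1 - x²)^(α-1)` with `α - 1 > -1`.
-/

open MeasureTheory Real Set Filter Topology Polynomial

namespace Polynomial

variable {R : Type*} [Ring R]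

theorem degree_sub_C_coeff_mul_lt {p Q : R[X]} {m : ℕ} (hp : p.Monic) (hpm : p.natDegree = m)
    (hQ : Q.degree < ↑(m + 1)) : (Q - C (Q.coeff m) * p).degree < m := by
  rw [degree_lt_iff_coeff_zero]
  intro k hk
  rw [coeff_sub, coeff_C_mul]
  rcases hk.eq_or_lt with rfl | hlt
  · rw [← hpm, hp.coeff_natDegree, mul_one, sub_self]
  · have hQk : Q.coeff k = 0 := coeff_eq_zero_of_degree_lt (hQ.trans_le (by exact_mod_cast hlt))
    have hpk : p.coeff k = 0 := coeff_eq_zero_of_natDegree_lt (hpm ▸ hlt)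
    rw [hQk, hpk, mul_zero, sub_zero]

theorem degree_X_mul_derivative_sub_lt {p : R[X]} {n : ℕ} (hp : p.natDegree ≤ n) :
    (X * derivative p - C (n : R) * p).degree < (n : WithBot ℕ) := by
  rw [degree_lt_iff_coeff_zero]
  rintro (_ | k) hk
  · obtain rfl : n = 0 := by omega
    simp
  · rw [coeff_sub, coeff_X_mul, coeff_derivative, coeff_C_mul, ← Nat.cast_succ,
      ← Nat.cast_comm, sub_eq_zero]
    rcases hk.eq_or_lt with rfl | hlt
    · push_cast; rfl
    · rw [coeff_eq_zero_of_natDegree_lt (hp.trans_lt hlt), mul_zero, mul_zero]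

end Polynomial

section Orthogonality

variable {a b : ℝ} {w : ℝ → ℝ} {P : ℕ → ℝ[X]} {n : ℕ}

theorem integral_eval_mul_eq_zero_of_degree_lt (hw : IntervalIntegrable w volume a b)
    (hmonic : ∀ m, (P m).Monic) (hdeg : ∀ m, (P m).natDegree = m)
    (horth : ∀ m < n, ∫ x in a..b, (P n).eval x * (P m).eval x * w x = 0)
    {Q : ℝ[X]} (hQ : Q.degree < n) :
    ∫ x in a..b, (P n).eval x * Q.eval x * w x = 0 := by
  have hint : ∀ q : ℝ[X],
      IntervalIntegrable (fun x => (P n).eval x * q.eval x * w x) volume a b :=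
    fun _ => hw.continuousOn_mul (by fun_prop)
  suffices ∀ m ≤ n, ∀ Q : ℝ[X], Q.degree < m →
      ∫ x in a..b, (P n).eval x * Q.eval x * w x = 0 from this n le_rfl Q hQ
  intro m
  induction m with
  | zero =>
    intro _ Q hQ
    obtain rfl : Q = 0 := degree_eq_bot.1 (Nat.WithBot.lt_zero_iff.1 hQ)
    simp
  | succ m ih =>
    intro hmn Q hQ
    set Q' := Q - C (Q.coeff m) * P m
    have hsplit : ∀ x, (P n).eval x * Q.eval x * w x
        = Q.coeff m * ((P n).eval x * (P m).eval x * w x) + (P n).eval x * Q'.eval x * w x := by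
      intro x; simp only [Q', eval_sub, eval_C_mul]; ring
    simp_rw [hsplit]
    rw [intervalIntegral.integral_add ((hint (P m)).const_mul _) (hint Q'),
      intervalIntegral.integral_const_mul, horth m (by omega),
      ih (by omega) Q' (degree_sub_C_coeff_mul_lt (hmonic m) (hdeg m) hQ), mul_zero, add_zero]

theorem integral_eval_mul_X_mul_derivative (hw : IntervalIntegrable w volume a b)
    (hmonic : ∀ m, (P m).Monic) (hdeg : ∀ m, (P m).natDegree = m)
    (horth : ∀ m < n, ∫ x in a..b, (P n).eval x * (P m).eval x * w x = 0) :
    ∫ x in a..b, (P n).eval x * (x * (derivative (P n)).eval x) * w x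
      = n * ∫ x in a..b, (P n).eval x * (P n).eval x * w x := by
  set q := X * derivative (P n) - C (n : ℝ) * P n
  have hq : ∀ x, x * (derivative (P n)).eval x = q.eval x + n * (P n).eval x := by
    intro x; simp [q]
  simp_rw [hq, mul_add, add_mul]
  rw [intervalIntegral.integral_add (hw.continuousOn_mul (by fun_prop))
      (hw.continuousOn_mul (by fun_prop)),
    integral_eval_mul_eq_zero_of_degree_lt hw hmonic hdeg horth
      (degree_X_mul_derivative_sub_lt (hdeg n).le),
    zero_add, ← intervalIntegral.integral_const_mul]
  congr 1 with x
  ring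

end Orthogonality

theorem Real.mul_rpow_le_one_add_rpow_add_rpow {a b s : ℝ} (ha : 0 ≤ a) (hb : 0 ≤ b)
    (hab : a + b = 2) : (a * b) ^ s ≤ 1 + a ^ s + b ^ s := by
  have ha' := rpow_nonneg ha s
  have hb' := rpow_nonneg hb s
  rcases le_total 0 s with hs | hs
  · have : (a * b) ^ s ≤ 1 := rpow_le_one (by positivity) (by nlinarith [sq_nonneg (a - b)]) hs
    linarith
  rw [mul_rpow ha hb]
  rcases le_total a 1 with ha1 | ha1
  · have : b ^ s ≤ 1 := rpow_le_one_of_one_le_of_nonpos (by linarith) hs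
    nlinarith
  · have : a ^ s ≤ 1 := rpow_le_one_of_one_le_of_nonpos ha1 hs
    nlinarith

theorem intervalIntegrable_one_sub_sq_rpow {s : ℝ} (hs : -1 < s) :
    IntervalIntegrable (fun x : ℝ => (1 - x ^ 2) ^ s) volume (-1) 1 := by
  have hleft : IntervalIntegrable (fun x : ℝ => (1 - x) ^ s) volume (-1) 1 := by
    convert (intervalIntegral.intervalIntegrable_rpow' hs (a := 2) (b := 0)).comp_sub_left 1 <;>
      norm_num
  have hright : IntervalIntegrable (fun x : ℝ => (1 + x) ^ s) volume (-1) 1 := by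
    convert (intervalIntegral.intervalIntegrable_rpow' hs (a := 0) (b := 2)).comp_add_left 1 <;>
      norm_num
  refine (((intervalIntegrable_const (c := (1:ℝ))).add hleft).add hright).mono_fun'
    (by fun_prop : Measurable _).aestronglyMeasurable ?_
  refine (ae_restrict_mem measurableSet_uIoc).mono fun x hx => ?_
  rw [uIoc_of_le (by norm_num)] at hx
  have hx' : 1 - x ^ 2 = (1 - x) * (1 + x) := by ring
  dsimp only
  rw [norm_of_nonneg (rpow_nonneg (by nlinarith [hx.1, hx.2]) s), hx']
  exact mul_rpow_le_one_add_rpow_add_rpow (by linarith [hx.2]) (by linarith [hx.1]) (by linarith)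

/-- `expNegInvGlue (x ^ 2 / t)` is `e^{-t/x²}` for `x ≠ 0` and `0` at `x = 0`. -/
noncomputable def perturbedJacobiWeight (α t x : ℝ) : ℝ :=
  (1 - x ^ 2) ^ α * expNegInvGlue (x ^ 2 / t)

namespace perturbedJacobiWeight

variable {α t x : ℝ}

theorem of_ne_zero (ht : 0 < t) (hx : x ≠ 0) :
    perturbedJacobiWeight α t x = (1 - x ^ 2) ^ α * exp (-t / x ^ 2) := by
  rw [perturbedJacobiWeight, expNegInvGlue, if_neg (not_le.2 (by positivity)), inv_div, neg_div]

theorem eq_zero_of_sq_eq_one (hα : α ≠ 0) (hx : x ^ 2 = 1) :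
    perturbedJacobiWeight α t x = 0 := by
  simp [perturbedJacobiWeight, hx, zero_rpow hα]

theorem continuous (hα : 0 < α) : Continuous (perturbedJacobiWeight α t) := by
  have := (expNegInvGlue.contDiff (n := 0)).continuous
  unfold perturbedJacobiWeight
  fun_prop (disch := exact hα.le)

theorem continuous_div_sq (hα : 0 < α) :
    Continuous fun x => perturbedJacobiWeight α t x / x ^ 2 := by
  have hglue : ∀ x : ℝ, expNegInvGlue (x ^ 2 / t) / x ^ 2
      = t⁻¹ * ((X : ℝ[X]).eval (x ^ 2 / t)⁻¹ * expNegInvGlue (x ^ 2 / t)) := by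
    intro x
    rcases eq_or_ne t 0 with rfl | ht
    · simp
    rcases eq_or_ne x 0 with rfl | hx
    · simp
    rw [eval_X, inv_div]
    field_simp
  simp_rw [perturbedJacobiWeight, mul_div_assoc, hglue]
  exact ((continuous_const.sub (continuous_pow 2)).rpow_const fun _ => Or.inr hα.le).mul
    (continuous_const.mul ((expNegInvGlue.continuous_polynomial_eval_inv_mul X).comp
      ((continuous_pow 2).div_const t)))

theorem intervalIntegrable_div_one_sub_sq (hα : 0 < α) :
    IntervalIntegrable (fun x => perturbedJacobiWeight α t x / (1 - x ^ 2)) volume (-1) 1 := by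
  have hpow : IntervalIntegrable (fun x : ℝ => (1 - x ^ 2) ^ α / (1 - x ^ 2)) volume (-1) 1 := by
    refine (intervalIntegrable_one_sub_sq_rpow (s := α - 1) (by linarith)).congr_uIoo ?_
    intro x hx
    rw [uIoo_of_le (by norm_num)] at hx
    exact rpow_sub_one (by nlinarith [hx.1, hx.2]) α
  have := (expNegInvGlue.contDiff (n := 0)).continuous
  simpa only [perturbedJacobiWeight, mul_div_right_comm, mul_comm (expNegInvGlue _)] using
    hpow.continuousOn_mul (g := fun x => expNegInvGlue (x ^ 2 / t)) (by fun_prop)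

theorem hasDerivAt (ht : 0 < t) (hx0 : x ≠ 0) (hx : x ^ 2 < 1) :
    HasDerivAt (perturbedJacobiWeight α t)
      ((-2 * α * x / (1 - x ^ 2) + 2 * t / x ^ 3) * perturbedJacobiWeight α t x) x := by
  have hb : 0 < 1 - x ^ 2 := by linarith
  have hpow : HasDerivAt (fun y : ℝ => (1 - y ^ 2) ^ α)
      (α * (1 - x ^ 2) ^ (α - 1) * (-(2 * x))) x := by
    have hbase : HasDerivAt (fun y : ℝ => 1 - y ^ 2) (-(2 * x)) x := by
      simpa using (hasDerivAt_pow 2 x).const_sub 1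
    exact (hasDerivAt_rpow_const (Or.inl hb.ne')).comp x hbase
  have hexp :
      HasDerivAt (fun y : ℝ => exp (-t / y ^ 2)) (exp (-t / x ^ 2) * (2 * t / x ^ 3)) x := by
    have hin : HasDerivAt (fun y : ℝ => -t / y ^ 2) (2 * t / x ^ 3) x := by
      refine ((hasDerivAt_const x (-t)).div (hasDerivAt_pow 2 x)
        (pow_ne_zero 2 hx0)).congr_deriv ?_
      field_simp
      ring
    exact (hasDerivAt_exp _).comp x hin
  have hloc :
      perturbedJacobiWeight α t =ᶠ[𝓝 x] fun y => (1 - y ^ 2) ^ α * exp (-t / y ^ 2) := by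
    filter_upwards [eventually_ne_nhds hx0] with y hy using of_ne_zero ht hy
  refine ((hpow.mul hexp).congr_of_eventuallyEq hloc).congr_deriv ?_
  rw [of_ne_zero ht hx0, rpow_sub_one hb.ne']
  ring

theorem integral_sq_div_one_sub_sq (hα : 0 < α) (ht : 0 < t) (p : ℝ[X]) :
    2 * α * ∫ x in (-1:ℝ)..1, p.eval x ^ 2 * perturbedJacobiWeight α t x / (1 - x ^ 2)
      = (1 + 2 * α) * (∫ x in (-1:ℝ)..1, p.eval x * p.eval x * perturbedJacobiWeight α t x)
        + 2 * (∫ x in (-1:ℝ)..1,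
            p.eval x * (x * (derivative p).eval x) * perturbedJacobiWeight α t x)
        + 2 * t * ∫ x in (-1:ℝ)..1, p.eval x ^ 2 * perturbedJacobiWeight α t x / x ^ 2 := by
  set W := perturbedJacobiWeight α t
  have hW := continuous (t := t) hα
  let F x := x * p.eval x ^ 2 * W x
  let G x := (1 + 2 * α) * (p.eval x * p.eval x * W x)
    + 2 * (p.eval x * (x * (derivative p).eval x) * W x)
    - 2 * α * (p.eval x ^ 2 * W x / (1 - x ^ 2)) + 2 * t * (p.eval x ^ 2 * W x / x ^ 2)
  have i₁ : IntervalIntegrable (fun x => p.eval x * p.eval x * W x) volume (-1) 1 :=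
    Continuous.intervalIntegrable (by fun_prop) _ _
  have i₂ : IntervalIntegrable (fun x => p.eval x * (x * (derivative p).eval x) * W x)
      volume (-1) 1 :=
    Continuous.intervalIntegrable (by fun_prop) _ _
  have i₃ : IntervalIntegrable (fun x => p.eval x ^ 2 * W x / (1 - x ^ 2)) volume (-1) 1 := by
    simpa only [mul_div_assoc] using
      (intervalIntegrable_div_one_sub_sq hα).continuousOn_mul (g := fun x => p.eval x ^ 2)
        (by fun_prop)
  have i₄ : IntervalIntegrable (fun x => p.eval x ^ 2 * W x / x ^ 2) volume (-1) 1 := by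
    simp only [mul_div_assoc]
    exact Continuous.intervalIntegrable ((p.continuous.pow 2).mul (continuous_div_sq hα)) _ _
  have hFG : ∀ x ∈ Ioo (-1 : ℝ) 1 \ {0}, HasDerivAt F (G x) x := by
    rintro x ⟨⟨hx₁, hx₂⟩, hx0⟩
    have hx0 : x ≠ 0 := hx0
    have hx : x ^ 2 < 1 := by nlinarith
    have hb : 1 - x ^ 2 ≠ 0 := by linarith
    refine (((hasDerivAt_id x).mul ((p.hasDerivAt x).pow 2)).mul
      (hasDerivAt ht hx0 hx)).congr_deriv ?_
    simp only [G, W, Pi.mul_apply, Pi.pow_apply, id]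
    field_simp
    ring
  have hG : IntervalIntegrable G volume (-1) 1 :=
    (((i₁.const_mul _).add (i₂.const_mul _)).sub (i₃.const_mul _)).add (i₄.const_mul _)
  have hFTC : ∫ x in (-1:ℝ)..1, G x = F 1 - F (-1) :=
    integral_eq_of_hasDerivAt_off_countable_of_le F G (by norm_num) (countable_singleton 0)
      (Continuous.continuousOn (by fun_prop)) hFG hG
  have hF : F 1 = 0 ∧ F (-1) = 0 := by
    simp [F, W, eq_zero_of_sq_eq_one hα.ne']
  rw [hF.1, hF.2, sub_zero, intervalIntegral.integral_add
      (((i₁.const_mul _).add (i₂.const_mul _)).sub (i₃.const_mul _)) (i₄.const_mul _),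
    intervalIntegral.integral_sub ((i₁.const_mul _).add (i₂.const_mul _)) (i₃.const_mul _),
    intervalIntegral.integral_add (i₁.const_mul _) (i₂.const_mul _)] at hFTC
  simp only [intervalIntegral.integral_const_mul] at hFTC
  linarith

end perturbedJacobiWeight

theorem stmt_3
    (α t : ℝ) (hα : 0 < α) (ht : 0 < t)
    (w : ℝ → ℝ)
    (hw : ∀ x : ℝ, x ≠ 0 → w x = (1 - x ^ 2) ^ α * Real.exp (-t / x ^ 2))
    (hw0 : w 0 = 0)
    (P : ℕ → Polynomial ℝ)
    (hmonic : ∀ n, (P n).Monic)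
    (hdeg : ∀ n, (P n).natDegree = n)
    (h : ℕ → ℝ)
    (hpos : ∀ n, 0 < h n)
    (horth : ∀ j k, (∫ x in (-1:ℝ)..1, (P j).eval x * (P k).eval x * w x)
      = if j = k then h j else 0)
    (R : ℕ → ℝ)
    (hR : ∀ n, R n = 2 * t / h n *
      ∫ y in (-1:ℝ)..1, ((P n).eval y) ^ 2 * w y / y ^ 2)
    :
    ∀ n : ℕ,
      (2 * α / h n) * (∫ y in (-1:ℝ)..1, ((P n).eval y) ^ 2 * w y / (1 - y ^ 2))
          = 2 * (n : ℝ) + 1 + 2 * α + R n ∧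
      (2 * t / h n) * (∫ y in (-1:ℝ)..1, ((P n).eval y) ^ 2 * w y / y ^ 2)
          = -(2 * (n : ℝ) + 1 + 2 * α)
            + (2 * α / h n) * (∫ y in (-1:ℝ)..1, ((P n).eval y) ^ 2 * w y / (1 - y ^ 2)) := by
  intro n
  obtain rfl : w = perturbedJacobiWeight α t := by
    funext x
    rcases eq_or_ne x 0 with rfl | hx
    · simp [perturbedJacobiWeight, hw0]
    · rw [hw x hx, perturbedJacobiWeight.of_ne_zero ht hx]
  have hW :=
    (perturbedJacobiWeight.continuous (t := t) hα).intervalIntegrable (μ := volume) (-1) 1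
  have hlower : ∀ m < n,
      ∫ x in (-1:ℝ)..1, (P n).eval x * (P m).eval x * perturbedJacobiWeight α t x = 0 :=
    fun m hm => by rw [horth, if_neg hm.ne']
  have hnorm :
      ∫ x in (-1:ℝ)..1, (P n).eval x * (P n).eval x * perturbedJacobiWeight α t x = h n := by
    rw [horth, if_pos rfl]
  have key := perturbedJacobiWeight.integral_sq_div_one_sub_sq hα ht (P n)
  rw [integral_eval_mul_X_mul_derivative hW hmonic hdeg hlower, hnorm] at key
  have hn := (hpos n).ne'
  constructor
  · rw [hR n]
    field_simp
    linarith
  · field_simp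
    linarith
end

section
/- For every n ≥ 0, the function t ↦ h_n(t) is differentiable on (0,∞) with h_n'(t) = -∫_{-1}^{1} P_n(x,t)^2·w(x,t)/x^2 dx; equivalently, 2t·(d/dt) ln h_n(t) = -R_n(t). -/
/-!
Write `h n t = ∫ P_n(x,t)² w(x,t) dx` and differentiate under the integral sign. Since every
`P n t` is monic of degree `n`, `∂ₜ P n` is a polynomial of degree `< n`, hence orthogonal to
`P n`; so the only surviving term comes from `∂ₜ w(x,t) = -w(x,t)/x²`. The logarithmic form
follows by the chain rule.
-/

open Filter Polynomial Real Set Topology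

theorem LinearMap.map_eq_zero_of_degree_lt_of_monic {R M : Type*} [Ring R] [AddCommGroup M]
    [Module R M] (L : R[X] →ₗ[R] M) {P : ℕ → R[X]} {n : ℕ}
    (hmonic : ∀ j < n, (P j).Monic) (hdeg : ∀ j < n, (P j).natDegree = j)
    (hL : ∀ j < n, L (P j) = 0) {q : R[X]} (hq : q.degree < n) : L q = 0 := by
  induction hd : q.natDegree using Nat.strong_induction_on generalizing q with
  | _ d ih =>
    obtain rfl | hq0 := eq_or_ne q 0
    · exact map_zero L
    have : Nontrivial R := nontrivial_of_ne _ 0 (leadingCoeff_ne_zero.mpr hq0)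
    have hdn : d < n := hd ▸ (natDegree_lt_iff_degree_lt hq0).mpr hq
    have hlead : (C q.leadingCoeff * P d).leadingCoeff = q.leadingCoeff := by
      rw [leadingCoeff_mul_monic (hmonic d hdn), leadingCoeff_C]
    have hdeg_eq : (C q.leadingCoeff * P d).degree = q.degree := by
      rw [degree_mul' (by simpa [(hmonic d hdn).leadingCoeff] using hq0), degree_C
        (leadingCoeff_ne_zero.mpr hq0), zero_add, degree_eq_natDegree (hmonic d hdn).ne_zero,
        degree_eq_natDegree hq0, hdeg d hdn, hd]
    have hrem : L (q - C q.leadingCoeff * P d) = 0 := by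
      obtain hr0 | hr0 := eq_or_ne (q - C q.leadingCoeff * P d) 0
      · rw [hr0, map_zero]
      have hlt := degree_sub_lt_left hdeg_eq.symm hq0 hlead.symm
      exact ih _ ((natDegree_lt_natDegree hr0 hlt).trans_eq hd) (hlt.trans hq) rfl
    rw [← sub_add_cancel q (C q.leadingCoeff * P d), map_add, hrem, C_mul', map_smul,
      hL d hdn, smul_zero, add_zero]

theorem intervalIntegral_eval_mul_eq_zero_of_degree_lt {P : ℕ → ℝ[X]} {n : ℕ}
    (hmonic : ∀ j < n, (P j).Monic) (hdeg : ∀ j < n, (P j).natDegree = j)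
    {g : ℝ → ℝ} (hg : Continuous g) {a b : ℝ}
    (horth : ∀ j < n, ∫ x in a..b, (P j).eval x * g x = 0) {q : ℝ[X]} (hq : q.degree < n) :
    ∫ x in a..b, q.eval x * g x = 0 := by
  have hint (p : ℝ[X]) : IntervalIntegrable (fun x => p.eval x * g x) MeasureTheory.volume a b :=
    (p.continuous.mul hg).intervalIntegrable a b
  let L : ℝ[X] →ₗ[ℝ] ℝ :=
    { toFun := fun p => ∫ x in a..b, p.eval x * g x
      map_add' := fun p r => by
        simp only [eval_add, add_mul]
        exact intervalIntegral.integral_add (hint p) (hint r)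
      map_smul' := fun c p => by
        simp only [eval_smul, smul_eq_mul, mul_assoc, RingHom.id_apply]
        exact intervalIntegral.integral_const_mul c _ }
  exact L.map_eq_zero_of_degree_lt_of_monic hmonic hdeg horth hq

theorem exists_hasDerivAt_eval_of_monic {P : ℝ → ℝ[X]} {n : ℕ} {t : ℝ}
    (hP : ∀ᶠ s in 𝓝 t, (P s).Monic ∧ (P s).natDegree = n)
    (hcoeff : ∀ i < n, DifferentiableAt ℝ (fun s => (P s).coeff i) t) :
    ∃ q : ℝ[X], q.degree < n ∧ ∀ x, HasDerivAt (fun s => (P s).eval x) (q.eval x) t := by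
  refine ⟨∑ i : Fin n, C (deriv (fun s => (P s).coeff i) t) * X ^ (i : ℕ),
    degree_sum_fin_lt _, fun x => ?_⟩
  have hsum : HasDerivAt (fun s => x ^ n + ∑ i ∈ Finset.range n, (P s).coeff i * x ^ i)
      (0 + ∑ i ∈ Finset.range n, deriv (fun s => (P s).coeff i) t * x ^ i) t :=
    (hasDerivAt_const t _).add <| HasDerivAt.fun_sum fun i hi =>
      ((hcoeff i (Finset.mem_range.mp hi)).hasDerivAt).mul_const _
  have heq : (fun s => (P s).eval x) =ᶠ[𝓝 t]
      fun s => x ^ n + ∑ i ∈ Finset.range n, (P s).coeff i * x ^ i := by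
    filter_upwards [hP] with s ⟨hmon, hdeg⟩
    conv_lhs => rw [hmon.as_sum, hdeg]
    simp [eval_finsetSum]
  refine (hsum.congr_of_eventuallyEq heq).congr_deriv ?_
  rw [zero_add, eval_finsetSum, ← Fin.sum_univ_eq_sum_range]
  simp

theorem tendsto_div_sq_nhdsNE_zero_atTop {t : ℝ} (ht : 0 < t) :
    Tendsto (fun x : ℝ => t / x ^ 2) (𝓝[≠] 0) atTop := by
  have hsq : Tendsto (fun x : ℝ => x ^ 2) (𝓝[≠] 0) (𝓝[>] 0) := by
    refine tendsto_nhdsWithin_of_tendsto_nhds_of_eventually_within _ ?_ ?_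
    · exact ((continuous_pow 2).tendsto' 0 0 (by simp)).mono_left nhdsWithin_le_nhds
    · filter_upwards [self_mem_nhdsWithin] with x hx using sq_pos_of_ne_zero hx
  simpa [div_eq_mul_inv] using (tendsto_inv_nhdsGT_zero.comp hsq).const_mul_atTop ht

theorem continuous_exp_neg_div_sq_div_sq {t : ℝ} (ht : 0 < t) :
    Continuous fun x : ℝ => exp (-t / x ^ 2) / x ^ 2 := by
  refine continuous_iff_continuousAt.mpr fun x => ?_
  obtain rfl | hx := eq_or_ne x 0
  · rw [← continuousWithinAt_compl_self, ContinuousWithinAt, zero_pow two_ne_zero, div_zero]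
    -- `exp (-u) / x ^ 2 = t⁻¹ * (u * exp (-u))` with `u = t / x ^ 2 → ∞`
    have hlim := ((tendsto_pow_mul_exp_neg_atTop_nhds_zero 1).comp
      (tendsto_div_sq_nhdsNE_zero_atTop ht)).const_mul t⁻¹
    rw [mul_zero] at hlim
    refine hlim.congr' ?_
    filter_upwards [self_mem_nhdsWithin] with y hy
    simp only [Function.comp_apply, pow_one, neg_div]
    field_simp
  · have hx2 : x ^ 2 ≠ 0 := pow_ne_zero 2 hx
    fun_prop (disch := exact hx2)

theorem continuous_div_sq_of_eq_rpow_mul_exp {α t : ℝ} (hα : 0 ≤ α) (ht : 0 < t) {v : ℝ → ℝ}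
    (hv : ∀ x, x ≠ 0 → v x = (1 - x ^ 2) ^ α * exp (-t / x ^ 2)) (hv0 : v 0 = 0) :
    Continuous fun x => v x / x ^ 2 := by
  have heq : (fun x => v x / x ^ 2) = fun x => (1 - x ^ 2) ^ α * (exp (-t / x ^ 2) / x ^ 2) := by
    funext x
    obtain rfl | hx := eq_or_ne x 0
    · simp [hv0]
    · rw [hv x hx, mul_div_assoc]
  rw [heq]
  exact ((by fun_prop : Continuous fun x : ℝ => 1 - x ^ 2).rpow_const fun _ => Or.inr hα).mul
    (continuous_exp_neg_div_sq_div_sq ht)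

theorem continuous_of_eq_rpow_mul_exp {α t : ℝ} (hα : 0 ≤ α) (ht : 0 < t) {v : ℝ → ℝ}
    (hv : ∀ x, x ≠ 0 → v x = (1 - x ^ 2) ^ α * exp (-t / x ^ 2)) (hv0 : v 0 = 0) :
    Continuous v := by
  have heq : v = fun x => x ^ 2 * (v x / x ^ 2) := by
    funext x
    obtain rfl | hx := eq_or_ne x 0
    · simp [hv0]
    · field_simp
  rw [heq]
  exact (continuous_pow 2).mul (continuous_div_sq_of_eq_rpow_mul_exp hα ht hv hv0)

theorem hasDerivAt_of_eq_rpow_mul_exp {α : ℝ} {w : ℝ → ℝ → ℝ}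
    (hw : ∀ t, 0 < t → ∀ x, x ≠ 0 → w t x = (1 - x ^ 2) ^ α * exp (-t / x ^ 2))
    {t x : ℝ} (ht : 0 < t) (hx : x ≠ 0) :
    HasDerivAt (fun s => w s x) (-(w t x / x ^ 2)) t := by
  have hexp : HasDerivAt (fun s => (1 - x ^ 2) ^ α * exp (-s / x ^ 2))
      ((1 - x ^ 2) ^ α * (exp (-t / x ^ 2) * (-1 / x ^ 2))) t :=
    (((hasDerivAt_id t).neg.div_const _).exp).const_mul _
  have heq : (fun s => w s x) =ᶠ[𝓝 t] fun s => (1 - x ^ 2) ^ α * exp (-s / x ^ 2) := by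
    filter_upwards [Ioi_mem_nhds ht] with s hs using hw s hs x hx
  refine (hexp.congr_of_eventuallyEq heq).congr_deriv ?_
  rw [hw t ht x hx]
  ring

theorem integral_deriv_sq_mul_eq_neg_integral_div_sq {p w : ℝ → ℝ → ℝ} {p' : ℝ → ℝ}
    {a b t : ℝ} (hp : ∀ x, HasDerivAt (fun s => p s x) (p' x) t)
    (hw : ∀ x, x ≠ 0 → HasDerivAt (fun s => w s x) (-(w t x / x ^ 2)) t)
    (hpt : Continuous (p t)) (hp' : Continuous p') (hwt : Continuous (w t))
    (hwt_div : Continuous fun x => w t x / x ^ 2)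
    (horth : ∫ x in a..b, p' x * (p t x * w t x) = 0) :
    ∫ x in a..b, deriv (fun s => p s x * p s x * w s x) t =
      -∫ x in a..b, p t x ^ 2 * w t x / x ^ 2 := by
  have hderiv : ∀ x, x ≠ 0 → deriv (fun s => p s x * p s x * w s x) t =
      2 * (p' x * (p t x * w t x)) - p t x ^ 2 * (w t x / x ^ 2) := fun x hx => by
    rw [(((hp x).fun_mul (hp x)).fun_mul (hw x hx)).deriv]
    ring
  rw [intervalIntegral.integral_congr_ae (by
      filter_upwards [MeasureTheory.volume.ae_ne 0] with x hx _ using hderiv x hx),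
    intervalIntegral.integral_sub
      ((by fun_prop : Continuous fun x => 2 * (p' x * (p t x * w t x))).intervalIntegrable _ _)
      ((by fun_prop : Continuous fun x => p t x ^ 2 * (w t x / x ^ 2)).intervalIntegrable _ _),
    intervalIntegral.integral_const_mul, horth, mul_zero, zero_sub]
  simp_rw [mul_div_assoc]

theorem stmt_11
    (α : ℝ) (hα : 0 < α)
    (w : ℝ → ℝ → ℝ)
    (hw : ∀ t : ℝ, 0 < t → ∀ x : ℝ, x ≠ 0 →
      w t x = (1 - x ^ 2) ^ α * Real.exp (-t / x ^ 2))
    (hw0 : ∀ t : ℝ, 0 < t → w t 0 = 0)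
    (P : ℕ → ℝ → Polynomial ℝ)
    (hmonic : ∀ n : ℕ, ∀ t : ℝ, 0 < t → (P n t).Monic)
    (hdeg : ∀ n : ℕ, ∀ t : ℝ, 0 < t → (P n t).natDegree = n)
    (h : ℕ → ℝ → ℝ)
    (hpos : ∀ n : ℕ, ∀ t : ℝ, 0 < t → 0 < h n t)
    (horth : ∀ t : ℝ, 0 < t → ∀ j k,
      (∫ x in (-1:ℝ)..1, (P j t).eval x * (P k t).eval x * w t x)
        = if j = k then h j t else 0)
    (hcoeff : ∀ n i : ℕ, DifferentiableOn ℝ (fun s => (P n s).coeff i) (Set.Ioi 0))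
    (hswap : ∀ n m : ℕ, ∀ t : ℝ, 0 < t →
      HasDerivAt (fun s => ∫ x in (-1:ℝ)..1, (P n s).eval x * (P m s).eval x * w s x)
        (∫ x in (-1:ℝ)..1, deriv (fun s => (P n s).eval x * (P m s).eval x * w s x) t) t)
    (R : ℕ → ℝ → ℝ)
    (hR : ∀ n : ℕ, ∀ t : ℝ, 0 < t → R n t = 2 * t / h n t *
      ∫ y in (-1:ℝ)..1, ((P n t).eval y) ^ 2 * w t y / y ^ 2)
    :
    ∀ n : ℕ, ∀ t : ℝ, 0 < t →
      HasDerivAt (h n) (-(∫ x in (-1:ℝ)..1, ((P n t).eval x) ^ 2 * w t x / x ^ 2)) t ∧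
      2 * t * deriv (fun s => Real.log (h n s)) t = -(R n t) := by
  intro n t ht
  obtain ⟨q, hq_deg, hq⟩ := exists_hasDerivAt_eval_of_monic (P := P n) (n := n)
    (by filter_upwards [Ioi_mem_nhds ht] with s hs using ⟨hmonic n s hs, hdeg n s hs⟩)
    fun i _ => (hcoeff n i).differentiableAt (Ioi_mem_nhds ht)
  have hwt := continuous_of_eq_rpow_mul_exp hα.le ht (hw t ht) (hw0 t ht)
  have hwt_div := continuous_div_sq_of_eq_rpow_mul_exp hα.le ht (hw t ht) (hw0 t ht)
  have hq_orth : ∫ x in (-1:ℝ)..1, q.eval x * ((P n t).eval x * w t x) = 0 :=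
    intervalIntegral_eval_mul_eq_zero_of_degree_lt (fun j _ => hmonic j t ht)
      (fun j _ => hdeg j t ht) (by fun_prop) (fun j hj => by
        simp_rw [← mul_assoc, horth t ht j n, if_neg hj.ne]) hq_deg
  have hd : HasDerivAt (h n) (-∫ x in (-1:ℝ)..1, ((P n t).eval x) ^ 2 * w t x / x ^ 2) t := by
    rw [← integral_deriv_sq_mul_eq_neg_integral_div_sq hq
      (fun x hx => hasDerivAt_of_eq_rpow_mul_exp hw ht hx) (P n t).continuous q.continuous hwt
      hwt_div hq_orth]
    refine (hswap n n t ht).congr_of_eventuallyEq ?_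
    filter_upwards [Ioi_mem_nhds ht] with s hs
    rw [horth s hs n n, if_pos rfl]
  refine ⟨hd, ?_⟩
  rw [(hd.log (hpos n t ht).ne').deriv, hR n t ht]
  field_simp
end

section
/- For every n ≥ 1, the function t ↦ p(n,t) is differentiable on (0,∞) and satisfies 2t·(d/dt) p(n,t) = [1-(-1)^n]·t - β_n(t)·R_n(t). -/
open Polynomial MeasureTheory Set Filter

noncomputable def Sint (W : ℝ → ℝ) (q r : Polynomial ℝ) : ℝ :=
  ∫ x in (-1:ℝ)..1, q.eval x * r.eval x * W x

structure Setup (α t : ℝ) (W : ℝ → ℝ) (P : ℕ → Polynomial ℝ) (h : ℕ → ℝ) : Prop where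
  hα : 0 < α
  ht : 0 < t
  hW : ∀ x : ℝ, x ≠ 0 → W x = (1 - x^2) ^ α * Real.exp (-t/x^2)
  hW0 : W 0 = 0
  hmonic : ∀ n, (P n).Monic
  hdeg : ∀ n, (P n).natDegree = n
  hpos : ∀ n, 0 < h n
  horth : ∀ j k, Sint W (P j) (P k) = if j = k then h j else 0

namespace Setup

variable {α t : ℝ} {W : ℝ → ℝ} {P : ℕ → Polynomial ℝ} {h : ℕ → ℝ}

lemma W_nonneg (S : Setup α t W P h) (x : ℝ) (hx : |x| ≤ 1) : 0 ≤ W x := by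
  rcases eq_or_ne x 0 with rfl | hx0
  · rw [S.hW0]
  · rw [S.hW x hx0]
    have h1 : (0:ℝ) ≤ 1 - x^2 := by nlinarith [abs_nonneg x, sq_abs x]
    positivity

lemma W_pos (S : Setup α t W P h) (x : ℝ) (hx : |x| < 1) (hx0 : x ≠ 0) : 0 < W x := by
  rw [S.hW x hx0]
  have h1 : (0:ℝ) < 1 - x^2 := by nlinarith [abs_nonneg x, sq_abs x]
  positivity

lemma W_le_one (S : Setup α t W P h) (x : ℝ) (hx : |x| ≤ 1) : W x ≤ 1 := by
  rcases eq_or_ne x 0 with rfl | hx0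
  · rw [S.hW0]; norm_num
  · rw [S.hW x hx0]
    have h1 : (0:ℝ) ≤ 1 - x^2 := by nlinarith [abs_nonneg x, sq_abs x]
    have h2 : (1 - x^2 : ℝ) ≤ 1 := by nlinarith [sq_nonneg x]
    have h3 : (1 - x^2 : ℝ) ^ α ≤ 1 := Real.rpow_le_one h1 h2 S.hα.le
    have h4 : Real.exp (-t/x^2) ≤ 1 := by
      apply Real.exp_le_one_iff.mpr
      have hx2 : (0:ℝ) < x^2 := by positivity
      have ht := S.ht
      exact div_nonpos_iff.mpr (Or.inr ⟨by linarith, hx2.le⟩)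
    calc (1 - x^2) ^ α * Real.exp (-t/x^2) ≤ 1 * 1 := by
          apply mul_le_mul h3 h4 (Real.exp_pos _).le (by norm_num)
      _ = 1 := by norm_num

lemma W_div_sq_le (S : Setup α t W P h) (x : ℝ) (hx : |x| ≤ 1) (hx0 : x ≠ 0) :
    W x / x^2 ≤ 1 / t := by
  have hx2 : (0:ℝ) < x^2 := by positivity
  have ht := S.ht
  rw [S.hW x hx0]
  have h1 : (0:ℝ) ≤ 1 - x^2 := by nlinarith [abs_nonneg x, sq_abs x]
  have h2 : (1 - x^2 : ℝ) ^ α ≤ 1 := Real.rpow_le_one h1 (by nlinarith [sq_nonneg x]) S.hα.le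
  have h3 : Real.exp (-t/x^2) / x^2 ≤ 1 / t := by
    have key : (t/x^2) * Real.exp (-(t/x^2)) ≤ 1 := by
      rw [Real.exp_neg]
      have h5 : t/x^2 ≤ Real.exp (t/x^2) := by linarith [Real.add_one_le_exp (t/x^2)]
      calc t/x^2 * (Real.exp (t/x^2))⁻¹ ≤ Real.exp (t/x^2) * (Real.exp (t/x^2))⁻¹ :=
            mul_le_mul_of_nonneg_right h5 (by positivity)
        _ = 1 := mul_inv_cancel₀ (Real.exp_pos _).ne'
    have key2 : t * Real.exp (-(t/x^2)) ≤ x^2 := by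
      calc t * Real.exp (-(t/x^2)) = ((t/x^2) * Real.exp (-(t/x^2))) * x^2 := by
            field_simp
        _ ≤ 1 * x^2 := mul_le_mul_of_nonneg_right key hx2.le
        _ = x^2 := one_mul _
    have heq : Real.exp (-t/x^2) = Real.exp (-(t/x^2)) := by rw [neg_div]
    rw [heq, div_le_div_iff₀ hx2 ht]
    linarith [key2]
  calc (1 - x^2) ^ α * Real.exp (-t/x^2) / x^2
      ≤ 1 * (Real.exp (-t/x^2) / x^2) := by
        rw [mul_div_assoc]
        apply mul_le_mul_of_nonneg_right h2 (by positivity)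
    _ ≤ 1 / t := by rw [one_mul]; exact h3

lemma W_even (S : Setup α t W P h) (x : ℝ) : W (-x) = W x := by
  rcases eq_or_ne x 0 with rfl | hx0
  · norm_num
  · rw [S.hW x hx0, S.hW (-x) (neg_ne_zero.mpr hx0)]
    ring_nf

lemma aux_null : volume ({0, 1} : Set ℝ) = 0 := by
  exact ((Set.finite_singleton (1:ℝ)).insert 0).measure_zero volume

lemma Wres_ae (S : Setup α t W P h) :
    W =ᵐ[volume.restrict (Set.uIoc (-1:ℝ) 1)]
      fun x => Real.exp (Real.log (1 - x^2) * α) * Real.exp (-t/x^2) := by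
  rw [Set.uIoc_of_le (by norm_num : (-1:ℝ) ≤ 1)]
  rw [Filter.EventuallyEq, ae_restrict_iff' measurableSet_Ioc]
  have hnull : volume ({x : ℝ | ¬ (x ∈ Set.Ioc (-1:ℝ) 1 →
      W x = Real.exp (Real.log (1 - x^2) * α) * Real.exp (-t/x^2))}) = 0 := by
    refine measure_mono_null ?_ aux_null
    intro x hx
    simp only [Set.mem_setOf_eq, Classical.not_imp] at hx
    obtain ⟨hmem, hne⟩ := hx
    by_contra hx01
    simp only [Set.mem_insert_iff, Set.mem_singleton_iff, not_or] at hx01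
    obtain ⟨h0, h1⟩ := hx01
    apply hne
    have hlt : x < 1 := lt_of_le_of_ne hmem.2 h1
    have hpos : (0:ℝ) < 1 - x^2 := by nlinarith [hmem.1]
    rw [S.hW x h0, Real.rpow_def_of_pos hpos]
  exact hnull

lemma integrable_bd (S : Setup α t W P h) (G : ℝ → ℝ) (hG : Measurable G) (M : ℝ)
    (hM : ∀ x : ℝ, |x| ≤ 1 → x ≠ 0 → |G x * W x| ≤ M) :
    IntervalIntegrable (fun x => G x * W x) volume (-1) 1 := by
  rw [intervalIntegrable_iff, Set.uIoc_of_le (by norm_num : (-1:ℝ) ≤ 1)]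
  have hae0 : ∀ᵐ x : ℝ ∂volume, x ≠ 0 := by
    rw [ae_iff]
    convert Real.volume_singleton (a := (0:ℝ)) using 2
    ext y; simp
  have hae : ∀ᵐ x ∂(volume.restrict (Set.Ioc (-1:ℝ) 1)), x ≠ 0 :=
    ae_restrict_of_ae hae0
  have hFmeas : Measurable (fun x : ℝ => Real.exp (Real.log (1 - x^2) * α) * Real.exp (-t/x^2)) := by
    have m1 : Measurable fun x : ℝ => 1 - x^2 := by measurability
    have m2 : Measurable fun x : ℝ => -t / x^2 := by measurability
    exact (Real.measurable_exp.comp ((Real.measurable_log.comp m1).mul measurable_const)).mul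
      (Real.measurable_exp.comp m2)
  have hWae : W =ᵐ[volume.restrict (Set.Ioc (-1:ℝ) 1)]
      fun x => Real.exp (Real.log (1 - x^2) * α) * Real.exp (-t/x^2) := by
    have := S.Wres_ae
    rwa [Set.uIoc_of_le (by norm_num : (-1:ℝ) ≤ 1)] at this
  apply Integrable.mono' (g := fun _ => M)
  · exact integrableOn_const measure_Ioc_lt_top.ne
  · apply AEStronglyMeasurable.congr ((hG.mul hFmeas).aestronglyMeasurable)
    filter_upwards [hWae] with x hx
    rw [hx]; rfl
  · filter_upwards [hae, ae_restrict_mem measurableSet_Ioc] with x hx0 hxm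
    have : |x| ≤ 1 := abs_le.mpr ⟨le_of_lt hxm.1, hxm.2⟩
    rw [Real.norm_eq_abs]
    exact hM x this hx0

end Setup

lemma poly_bound (q : Polynomial ℝ) : ∃ M : ℝ, ∀ x : ℝ, |x| ≤ 1 → |q.eval x| ≤ M := by
  obtain ⟨C, hC⟩ := (isCompact_Icc (a := (-1:ℝ)) (b := 1)).exists_bound_of_continuousOn
    (q.continuous.continuousOn)
  refine ⟨C, fun x hx => ?_⟩
  have := hC x (by rw [Set.mem_Icc]; exact abs_le.mp hx)
  simpa using this

lemma poly_nonneg_bound (q : Polynomial ℝ) :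
    ∃ M : ℝ, 0 ≤ M ∧ ∀ x : ℝ, |x| ≤ 1 → |q.eval x| ≤ M := by
  obtain ⟨M, hM⟩ := poly_bound q
  exact ⟨M, le_trans (abs_nonneg _) (hM 0 (by norm_num)), hM⟩

namespace Setup

variable {α t : ℝ} {W : ℝ → ℝ} {P : ℕ → Polynomial ℝ} {h : ℕ → ℝ}

lemma int1 (S : Setup α t W P h) (q : Polynomial ℝ) :
    IntervalIntegrable (fun x => q.eval x * W x) volume (-1) 1 := by
  obtain ⟨M, hM0, hM⟩ := poly_nonneg_bound q
  apply S.integrable_bd _ q.continuous.measurable M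
  intro x hx hx0
  rw [abs_mul]
  calc |q.eval x| * |W x| ≤ M * 1 := by
        apply mul_le_mul (hM x hx) _ (abs_nonneg _) hM0
        rw [abs_of_nonneg (S.W_nonneg x hx)]
        exact S.W_le_one x hx
    _ = M := mul_one M

lemma int2 (S : Setup α t W P h) (q : Polynomial ℝ) :
    IntervalIntegrable (fun x => q.eval x * W x / x^2) volume (-1) 1 := by
  obtain ⟨M, hM0, hM⟩ := poly_nonneg_bound q
  have key := S.integrable_bd (fun x => q.eval x / x^2)
    (q.continuous.measurable.div ((continuous_pow 2).measurable)) (M * (1/t)) ?_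
  · have : (fun x => q.eval x / x^2 * W x) = fun x => q.eval x * W x / x^2 := by
      funext x; ring
    rwa [this] at key
  · intro x hx hx0
    have hx2 : (0:ℝ) < x^2 := by positivity
    have heq : q.eval x / x^2 * W x = q.eval x * (W x / x^2) := by ring
    rw [heq, abs_mul]
    apply mul_le_mul (hM x hx) _ (abs_nonneg _) hM0
    rw [abs_of_nonneg (div_nonneg (S.W_nonneg x hx) hx2.le)]
    exact S.W_div_sq_le x hx hx0

lemma int3 (S : Setup α t W P h) (q : Polynomial ℝ) :
    IntervalIntegrable (fun x => q.eval x * W x / x) volume (-1) 1 := by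
  obtain ⟨M, hM0, hM⟩ := poly_nonneg_bound q
  have key := S.integrable_bd (fun x => q.eval x / x)
    (q.continuous.measurable.div measurable_id) (M * (1/t)) ?_
  · have : (fun x => q.eval x / x * W x) = fun x => q.eval x * W x / x := by
      funext x; ring
    rwa [this] at key
  · intro x hx hx0
    have hx2 : (0:ℝ) < x^2 := by positivity
    have hxa : (0:ℝ) < |x| := abs_pos.mpr hx0
    have heq : q.eval x / x * W x = q.eval x * (W x / x) := by ring
    rw [heq, abs_mul]
    apply mul_le_mul (hM x hx) _ (abs_nonneg _) hM0
    have h1 : |W x / x| = W x / |x| := by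
      rw [abs_div, abs_of_nonneg (S.W_nonneg x hx)]
    rw [h1]
    have h2 : x^2 ≤ |x| := by
      nlinarith [sq_abs x, abs_nonneg x, hx]
    calc W x / |x| ≤ W x / x^2 :=
          div_le_div_of_nonneg_left (S.W_nonneg x hx) hx2 h2
      _ ≤ 1/t := S.W_div_sq_le x hx hx0

lemma intS (S : Setup α t W P h) (q r : Polynomial ℝ) :
    IntervalIntegrable (fun x => q.eval x * r.eval x * W x) volume (-1) 1 := by
  have := S.int1 (q * r)
  have heq : (fun x => (q*r).eval x * W x) = fun x => q.eval x * r.eval x * W x := by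
    funext x; rw [Polynomial.eval_mul]
  rwa [heq] at this

lemma intT (S : Setup α t W P h) (q r : Polynomial ℝ) :
    IntervalIntegrable (fun x => q.eval x * r.eval x * W x / x^2) volume (-1) 1 := by
  have := S.int2 (q * r)
  have heq : (fun x => (q*r).eval x * W x / x^2) = fun x => q.eval x * r.eval x * W x / x^2 := by
    funext x; rw [Polynomial.eval_mul]
  rwa [heq] at this

lemma S_comm (q r : Polynomial ℝ) : Sint W q r = Sint W r q := by
  unfold Sint
  have : (fun x => q.eval x * r.eval x * W x) = fun x => r.eval x * q.eval x * W x := by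
    funext x; ring
  rw [this]

lemma S_add_left (S : Setup α t W P h) (q₁ q₂ r : Polynomial ℝ) :
    Sint W (q₁ + q₂) r = Sint W q₁ r + Sint W q₂ r := by
  unfold Sint
  have : (fun x => (q₁+q₂).eval x * r.eval x * W x) =
      fun x => (q₁.eval x * r.eval x * W x) + (q₂.eval x * r.eval x * W x) := by
    funext x; rw [Polynomial.eval_add]; ring
  rw [this, intervalIntegral.integral_add (S.intS q₁ r) (S.intS q₂ r)]

lemma S_smul_left (c : ℝ) (q r : Polynomial ℝ) :
    Sint W (c • q) r = c * Sint W q r := by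
  unfold Sint
  rw [← intervalIntegral.integral_const_mul]
  congr 1
  funext x
  rw [Polynomial.eval_smul, smul_eq_mul]; ring

lemma S_sub_left (S : Setup α t W P h) (q₁ q₂ r : Polynomial ℝ) :
    Sint W (q₁ - q₂) r = Sint W q₁ r - Sint W q₂ r := by
  have : q₁ - q₂ = q₁ + (-1 : ℝ) • q₂ := by
    rw [neg_one_smul]; ring
  rw [this, S.S_add_left, S_smul_left]; ring

lemma S_zero_left (r : Polynomial ℝ) : Sint W 0 r = 0 := by
  unfold Sint; simp

lemma S_mulX (q r : Polynomial ℝ) :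
    Sint W (Polynomial.X * q) r = Sint W (Polynomial.X * r) q := by
  unfold Sint
  have : (fun x => (Polynomial.X * q).eval x * r.eval x * W x) =
      fun x => (Polynomial.X * r).eval x * q.eval x * W x := by
    funext x; simp only [Polynomial.eval_mul, Polynomial.eval_X]; ring
  rw [this]

lemma orth_lt (S : Setup α t W P h) (E : Polynomial ℝ) (m : ℕ)
    (hE : ∀ k, k ≤ m → Sint W (P k) E = 0) :
    ∀ q : Polynomial ℝ, q.degree < ((m + 1 : ℕ) : WithBot ℕ) → Sint W q E = 0 := by
  suffices H : ∀ d : ℕ, ∀ q : Polynomial ℝ, q.natDegree = d →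
      q.degree < ((m + 1 : ℕ) : WithBot ℕ) → Sint W q E = 0 by
    exact fun q hdeg => H q.natDegree q rfl hdeg
  intro d
  induction d using Nat.strong_induction_on with
  | _ d IH =>
    intro q hq hdeg
    by_cases h0 : q = 0
    · subst h0; exact S_zero_left E
    · have hdm : d ≤ m := by
        have h1 : q.natDegree < m + 1 :=
          (Polynomial.natDegree_lt_iff_degree_lt h0).mpr hdeg
        omega
      subst hq
      set r := q - q.coeff q.natDegree • P q.natDegree with hr
      have hqsum : q = q.coeff q.natDegree • P q.natDegree + r := by
        rw [hr]; ring
      have hrc : ∀ j, q.natDegree ≤ j → r.coeff j = 0 := by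
        intro j hj
        rw [hr]
        simp only [Polynomial.coeff_sub, Polynomial.coeff_smul, smul_eq_mul]
        rcases eq_or_lt_of_le hj with hj' | hj'
        · rw [← hj']
          have : (P q.natDegree).coeff q.natDegree = 1 := by
            have := (S.hmonic q.natDegree).coeff_natDegree
            rwa [S.hdeg q.natDegree] at this
          rw [this, mul_one, sub_self]
        · rw [Polynomial.coeff_eq_zero_of_natDegree_lt (p := q) hj',
            Polynomial.coeff_eq_zero_of_natDegree_lt (p := P q.natDegree)
              (by rw [S.hdeg]; exact hj'),
            mul_zero, sub_self]
      have hrdeg : r.degree < (q.natDegree : WithBot ℕ) :=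
        (Polynomial.degree_lt_iff_coeff_zero r q.natDegree).mpr (fun j hj => hrc j hj)
      have hSr : Sint W r E = 0 := by
        rcases eq_or_ne r 0 with hr0 | hr0
        · rw [hr0]; exact S_zero_left E
        · have hlt : r.natDegree < q.natDegree :=
            (Polynomial.natDegree_lt_iff_degree_lt hr0).mpr hrdeg
          apply IH r.natDegree hlt r rfl
            (lt_of_lt_of_le hrdeg (by exact_mod_cast Nat.le_succ_of_le hdm))
      calc Sint W q E
          = Sint W (q.coeff q.natDegree • P q.natDegree + r) E := by rw [← hqsum]
        _ = q.coeff q.natDegree * Sint W (P q.natDegree) E + Sint W r E := by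
            rw [S.S_add_left, S_smul_left]
        _ = 0 := by rw [hE q.natDegree hdm, hSr]; ring

lemma orth_P (S : Setup α t W P h) (n : ℕ) (q : Polynomial ℝ)
    (hq : q.degree < (n : WithBot ℕ)) : Sint W q (P n) = 0 := by
  cases n with
  | zero =>
    have : q = 0 := by
      ext j
      exact (Polynomial.degree_lt_iff_coeff_zero q 0).mp (by exact_mod_cast hq) j (Nat.zero_le j)
    rw [this]; exact S_zero_left _
  | succ m =>
    apply S.orth_lt (P (m+1)) m _ q (by exact_mod_cast hq)
    intro k hk
    rw [S.horth k (m+1), if_neg (by omega)]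

lemma S_eval (S : Setup α t W P h) (n : ℕ) (q : Polynomial ℝ)
    (hq : q.degree ≤ (n : WithBot ℕ)) : Sint W q (P n) = q.coeff n * h n := by
  set r := q - q.coeff n • P n with hr
  have hqsum : q = q.coeff n • P n + r := by rw [hr]; ring
  have hrdeg : r.degree < (n : WithBot ℕ) := by
    apply (Polynomial.degree_lt_iff_coeff_zero r n).mpr
    intro j hj
    rw [hr]
    simp only [Polynomial.coeff_sub, Polynomial.coeff_smul, smul_eq_mul]
    rcases eq_or_lt_of_le hj with hj' | hj'
    · rw [← hj']
      have h1 : (P n).coeff n = 1 := by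
        have := (S.hmonic n).coeff_natDegree
        rwa [S.hdeg n] at this
      rw [h1, mul_one, sub_self]
    · rw [Polynomial.coeff_eq_zero_of_natDegree_lt (p := P n) (by rw [S.hdeg]; exact hj')]
      have : q.coeff j = 0 := by
        apply (Polynomial.degree_le_iff_coeff_zero q n).mp hq
        exact_mod_cast hj'
      rw [this, mul_zero, sub_self]
  calc Sint W q (P n)
      = q.coeff n * Sint W (P n) (P n) + Sint W r (P n) := by
        conv_lhs => rw [hqsum]
        rw [S.S_add_left, S_smul_left]
    _ = q.coeff n * h n := by
        rw [S.horth n n, if_pos rfl, S.orth_P n r hrdeg]; ring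

end Setup

namespace Setup

variable {α t : ℝ} {W : ℝ → ℝ} {P : ℕ → Polynomial ℝ} {h : ℕ → ℝ}

lemma S_self (S : Setup α t W P h) (q : Polynomial ℝ) (hq : Sint W q q = 0) : q = 0 := by
  by_contra h0
  have hle : (-1:ℝ) ≤ 1 := by norm_num
  have hint : IntegrableOn (fun x => q.eval x * q.eval x * W x) (Set.Ioc (-1:ℝ) 1) volume := by
    have := S.intS q q
    rw [intervalIntegrable_iff, Set.uIoc_of_le hle] at this
    exact this
  have hnn : 0 ≤ᵐ[volume.restrict (Set.Ioc (-1:ℝ) 1)]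
      fun x => q.eval x * q.eval x * W x := by
    filter_upwards [ae_restrict_mem measurableSet_Ioc] with x hx
    have : |x| ≤ 1 := abs_le.mpr ⟨le_of_lt hx.1, hx.2⟩
    have := S.W_nonneg x this
    simp only [Pi.zero_apply]
    nlinarith [sq_nonneg (q.eval x)]
  have hzero : (∫ x in Set.Ioc (-1:ℝ) 1, q.eval x * q.eval x * W x) = 0 := by
    have := hq
    unfold Sint at this
    rwa [intervalIntegral.integral_of_le hle] at this
  have haez := (MeasureTheory.integral_eq_zero_iff_of_nonneg_ae hnn hint).mp hzero
  rw [Filter.EventuallyEq, ae_restrict_iff' measurableSet_Ioc] at haez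
  rw [ae_iff] at haez
  have hsub : Set.Ioo (0:ℝ) 1 ⊆
      {x | ¬(x ∈ Set.Ioc (-1:ℝ) 1 → q.eval x * q.eval x * W x = (0:ℝ→ℝ) x)} ∪
      {x | Polynomial.IsRoot q x} := by
    intro x hx
    by_cases hroot : q.eval x = 0
    · exact Or.inr hroot
    · left
      simp only [Set.mem_setOf_eq, Classical.not_imp]
      constructor
      · exact ⟨by linarith [hx.1], le_of_lt hx.2⟩
      · have hx0 : x ≠ 0 := ne_of_gt hx.1
        have hxa : |x| < 1 := by rw [abs_of_pos hx.1]; exact hx.2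
        have hW := S.W_pos x hxa hx0
        simp only [Pi.zero_apply]
        positivity
  have hroots : volume {x : ℝ | Polynomial.IsRoot q x} = 0 :=
    ((Polynomial.finite_setOf_isRoot h0).measure_zero volume)
  have : volume (Set.Ioo (0:ℝ) 1) = 0 := by
    apply measure_mono_null hsub
    exact measure_union_null haez hroots
  rw [Real.volume_Ioo] at this
  norm_num at this

end Setup

noncomputable def reflP (q : Polynomial ℝ) : Polynomial ℝ :=
  ∑ i ∈ Finset.range (q.natDegree + 1), Polynomial.C ((-1:ℝ)^i * q.coeff i) * Polynomial.X^i

lemma reflP_coeff (q : Polynomial ℝ) (j : ℕ) : (reflP q).coeff j = (-1)^j * q.coeff j := by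
  unfold reflP
  rw [Polynomial.finset_sum_coeff]
  by_cases hj : j ≤ q.natDegree
  · rw [Finset.sum_eq_single j]
    · rw [Polynomial.coeff_C_mul, Polynomial.coeff_X_pow, if_pos rfl, mul_one]
    · intro i _ hij
      rw [Polynomial.coeff_C_mul, Polynomial.coeff_X_pow, if_neg (Ne.symm hij), mul_zero]
    · intro hmem
      exact absurd (Finset.mem_range.mpr (by omega)) hmem
  · push_neg at hj
    rw [Polynomial.coeff_eq_zero_of_natDegree_lt (p := q) hj, mul_zero]
    apply Finset.sum_eq_zero
    intro i hi
    rw [Finset.mem_range] at hi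
    rw [Polynomial.coeff_C_mul, Polynomial.coeff_X_pow, if_neg (by omega : ¬ j = i), mul_zero]

lemma reflP_eval (q : Polynomial ℝ) (x : ℝ) : (reflP q).eval x = q.eval (-x) := by
  unfold reflP
  rw [Polynomial.eval_finset_sum,
    Polynomial.eval_eq_sum_range' (Nat.lt_succ_self q.natDegree) (-x)]
  apply Finset.sum_congr rfl
  intro i _
  simp only [Polynomial.eval_mul, Polynomial.eval_C, Polynomial.eval_pow, Polynomial.eval_X]
  rw [neg_pow x i]; ring

namespace Setup

variable {α t : ℝ} {W : ℝ → ℝ} {P : ℕ → Polynomial ℝ} {h : ℕ → ℝ}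

lemma S_reflect (S : Setup α t W P h) (q r : Polynomial ℝ) :
    Sint W (reflP q) (reflP r) = Sint W q r := by
  unfold Sint
  have key : (fun x => (reflP q).eval x * (reflP r).eval x * W x) =
      fun x => (fun y => q.eval y * r.eval y * W y) (-x) := by
    funext x
    show (reflP q).eval x * (reflP r).eval x * W x = q.eval (-x) * r.eval (-x) * W (-x)
    rw [reflP_eval, reflP_eval, S.W_even x]
  rw [key, intervalIntegral.integral_comp_neg (fun y => q.eval y * r.eval y * W y)]
  norm_num

lemma parity (S : Setup α t W P h) (n i : ℕ) (hni : (n + i) % 2 = 1) :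
    (P n).coeff i = 0 := by
  set Q := ((-1:ℝ)^n) • reflP (P n) with hQ
  have hQcoeff : ∀ j, Q.coeff j = (-1:ℝ)^(n+j) * (P n).coeff j := by
    intro j
    rw [hQ, Polynomial.coeff_smul, reflP_coeff, smul_eq_mul, pow_add]; ring
  have hPn : (P n).coeff n = 1 := by
    have := (S.hmonic n).coeff_natDegree
    rwa [S.hdeg n] at this
  set D := Q - P n with hD
  have hDcoeff : ∀ j, D.coeff j = ((-1:ℝ)^(n+j) - 1) * (P n).coeff j := by
    intro j
    rw [hD, Polynomial.coeff_sub, hQcoeff]; ring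
  have hDdeg : D.degree < (n : WithBot ℕ) := by
    apply (Polynomial.degree_lt_iff_coeff_zero D n).mpr
    intro j hj
    rcases eq_or_lt_of_le hj with hj' | hj'
    · rw [hDcoeff, ← hj']
      have : ((-1:ℝ))^(n+n) = 1 := by
        rw [← two_mul, pow_mul]; norm_num
      rw [this]; ring
    · rw [hDcoeff, Polynomial.coeff_eq_zero_of_natDegree_lt (p := P n)
        (by rw [S.hdeg]; exact hj'), mul_zero]
  have hreflD : (reflP D).degree < (n : WithBot ℕ) := by
    apply (Polynomial.degree_lt_iff_coeff_zero _ n).mpr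
    intro j hj
    rw [reflP_coeff, (Polynomial.degree_lt_iff_coeff_zero D n).mp hDdeg j hj, mul_zero]
  have hreflQ : reflP Q = ((-1:ℝ)^n) • P n := by
    ext j
    rw [reflP_coeff, hQcoeff, Polynomial.coeff_smul, smul_eq_mul, ← mul_assoc, ← pow_add]
    have hje : j + (n + j) = 2*j + n := by ring
    rw [hje, pow_add, pow_mul]
    norm_num
  have hreflDD : reflP (reflP D) = D := by
    ext j
    rw [reflP_coeff, reflP_coeff, ← mul_assoc, ← mul_pow]
    norm_num
  have hSDQ : Sint W D Q = 0 := by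
    have h1 : Sint W D Q = Sint W (reflP D) (reflP Q) := by
      conv_lhs => rw [← hreflDD, ← show reflP (reflP Q) = Q by
        ext j; rw [reflP_coeff, reflP_coeff, ← mul_assoc, ← mul_pow]; norm_num]
      exact S.S_reflect (reflP D) (reflP Q)
    rw [h1, hreflQ, S_comm, S_smul_left, S_comm]
    rw [S.orth_P n (reflP D) hreflD, mul_zero]
  have hSDP : Sint W D (P n) = 0 := S.orth_P n D hDdeg
  have hSDD : Sint W D D = 0 := by
    have : Sint W D D = Sint W D Q - Sint W D (P n) := by
      rw [S_comm, S.S_sub_left, S_comm (q := Q), S_comm (q := P n)]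
    rw [this, hSDQ, hSDP, sub_zero]
  have hD0 : D = 0 := S.S_self D hSDD
  have hfin := hDcoeff i
  rw [hD0] at hfin
  simp only [Polynomial.coeff_zero] at hfin
  have hodd : Odd (n + i) := Nat.odd_iff.mpr hni
  rw [hodd.neg_one_pow] at hfin
  linarith [hfin]

end Setup

noncomputable def Tint (W : ℝ → ℝ) (q : Polynomial ℝ) : ℝ :=
  ∫ x in (-1:ℝ)..1, q.eval x * W x / x^2

noncomputable def Uint (W : ℝ → ℝ) (q : Polynomial ℝ) : ℝ :=
  ∫ x in (-1:ℝ)..1, q.eval x * W x / x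

namespace Setup

variable {α t : ℝ} {W : ℝ → ℝ} {P : ℕ → Polynomial ℝ} {h : ℕ → ℝ}

lemma coeff_P_nd (S : Setup α t W P h) (n : ℕ) : (P n).coeff n = 1 := by
  have := (S.hmonic n).coeff_natDegree
  rwa [S.hdeg n] at this

lemma recur (S : Setup α t W P h) (m : ℕ) :
    h m • (Polynomial.X * P (m+1)) = h m • P (m+2) + h (m+1) • P m := by
  set E := h m • (Polynomial.X * P (m+1)) - h m • P (m+2) - h (m+1) • P m with hE
  have hcoeff : ∀ j, E.coeff j = h m * (Polynomial.X * P (m+1)).coeff j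
      - h m * (P (m+2)).coeff j - h (m+1) * (P m).coeff j := by
    intro j
    rw [hE]
    simp [Polynomial.coeff_sub, Polynomial.coeff_smul, smul_eq_mul]
  have hdegE : E.degree < ((m+1 : ℕ) : WithBot ℕ) := by
    apply (Polynomial.degree_lt_iff_coeff_zero E (m+1)).mpr
    intro j hj
    obtain ⟨k, rfl⟩ : ∃ k, j = k + 1 := ⟨j - 1, by omega⟩
    have hk : m ≤ k := by omega
    rw [hcoeff, Polynomial.coeff_X_mul]
    rcases eq_or_lt_of_le hk with hk' | hk'
    · subst hk'
      rw [S.parity (m+1) m (by omega), S.parity (m+2) (m+1) (by omega),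
        Polynomial.coeff_eq_zero_of_natDegree_lt (p := P m) (by rw [S.hdeg]; omega)]
      ring
    · rcases eq_or_lt_of_le (by omega : m + 1 ≤ k) with hk2 | hk2
      · have hc1 : (P (m+1)).coeff k = 1 := by rw [← hk2]; exact S.coeff_P_nd (m+1)
        have hc2 : (P (m+2)).coeff (k+1) = 1 := by
          rw [show k + 1 = m + 2 by omega]; exact S.coeff_P_nd (m+2)
        have hc3 : (P m).coeff (k+1) = 0 :=
          Polynomial.coeff_eq_zero_of_natDegree_lt (p := P m) (by rw [S.hdeg]; omega)
        rw [hc1, hc2, hc3]; ring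
      · rw [Polynomial.coeff_eq_zero_of_natDegree_lt (p := P (m+1)) (by rw [S.hdeg]; omega),
          Polynomial.coeff_eq_zero_of_natDegree_lt (p := P (m+2)) (by rw [S.hdeg]; omega),
          Polynomial.coeff_eq_zero_of_natDegree_lt (p := P m) (by rw [S.hdeg]; omega)]
        ring
  have hEk : ∀ k, k ≤ m → Sint W (P k) E = 0 := by
    intro k hk
    rw [S_comm, hE, S.S_sub_left, S.S_sub_left, S_smul_left, S_smul_left, S_smul_left,
      S_mulX]
    have hdXP : (Polynomial.X * P k).degree ≤ ((m+1 : ℕ) : WithBot ℕ) := by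
      refine le_trans Polynomial.degree_le_natDegree (Nat.cast_le.mpr ?_)
      calc (Polynomial.X * P k).natDegree
          ≤ Polynomial.X.natDegree + (P k).natDegree := Polynomial.natDegree_mul_le
        _ ≤ m + 1 := by rw [Polynomial.natDegree_X, S.hdeg]; omega
    rw [S.S_eval (m+1) _ hdXP, Polynomial.coeff_X_mul, S.horth (m+2) k, S.horth m k,
      if_neg (by omega : ¬ m + 2 = k)]
    rcases eq_or_lt_of_le hk with hk' | hk'
    · subst hk'
      rw [if_pos rfl, S.coeff_P_nd]
      ring
    · rw [if_neg (by omega : ¬ m = k),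
        Polynomial.coeff_eq_zero_of_natDegree_lt (p := P k) (by rw [S.hdeg]; omega)]
      ring
  have hE0 : E = 0 := S.S_self E (S.orth_lt E m hEk E hdegE)
  apply eq_of_sub_eq_zero
  rw [← sub_sub, ← hE]
  exact hE0

lemma P_zero (S : Setup α t W P h) : P 0 = 1 := by
  have h1 := Polynomial.eq_C_of_natDegree_eq_zero (S.hdeg 0)
  rw [h1, S.coeff_P_nd 0, Polynomial.C_1]

lemma P_one (S : Setup α t W P h) : P 1 = Polynomial.X := by
  have h1 := Polynomial.eq_X_add_C_of_natDegree_le_one (le_of_eq (S.hdeg 1))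
  rw [h1, S.coeff_P_nd 1, S.parity 1 0 (by omega)]
  simp

lemma U_split (S : Setup α t W P h) (q r : Polynomial ℝ) :
    Uint W (q * r) = Sint W q r.divX + r.coeff 0 * Uint W q := by
  have hdecomp : ∀ x : ℝ, r.eval x = r.divX.eval x * x + r.coeff 0 := by
    intro x
    conv_lhs => rw [← Polynomial.divX_mul_X_add r]
    simp [Polynomial.eval_add, Polynomial.eval_mul]
  have hpt : ∀ x : ℝ, (q*r).eval x * W x / x =
      q.eval x * r.divX.eval x * W x + r.coeff 0 * (q.eval x * W x / x) := by
    intro x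
    rcases eq_or_ne x 0 with rfl | hx0
    · rw [S.hW0]; simp
    · rw [Polynomial.eval_mul, hdecomp x]
      field_simp
  unfold Uint
  rw [show (fun x => (q*r).eval x * W x / x) = fun x =>
      (q.eval x * r.divX.eval x * W x) + (r.coeff 0 * (q.eval x * W x / x)) from
    funext (fun x => hpt x)]
  rw [intervalIntegral.integral_add (S.intS q _) ((S.int3 q).const_mul _),
    intervalIntegral.integral_const_mul]
  rfl

lemma T_split (S : Setup α t W P h) (q r : Polynomial ℝ) :
    Tint W (q * r) = Sint W q (r.divX.divX) + r.coeff 1 * Uint W q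
      + r.coeff 0 * Tint W q := by
  have hdecomp : ∀ x : ℝ, r.eval x =
      r.divX.divX.eval x * x^2 + r.coeff 1 * x + r.coeff 0 := by
    intro x
    conv_lhs => rw [← Polynomial.divX_mul_X_add r]
    conv_lhs => rw [← Polynomial.divX_mul_X_add r.divX]
    simp [Polynomial.eval_add, Polynomial.eval_mul, Polynomial.coeff_divX]
    ring
  have hpt : ∀ x : ℝ, (q*r).eval x * W x / x^2 =
      q.eval x * r.divX.divX.eval x * W x + r.coeff 1 * (q.eval x * W x / x)
      + r.coeff 0 * (q.eval x * W x / x^2) := by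
    intro x
    rcases eq_or_ne x 0 with rfl | hx0
    · rw [S.hW0]; simp
    · rw [Polynomial.eval_mul, hdecomp x]
      field_simp
  unfold Tint
  rw [show (fun x => (q*r).eval x * W x / x^2) = fun x =>
      (q.eval x * r.divX.divX.eval x * W x) + ((r.coeff 1 * (q.eval x * W x / x))
        + (r.coeff 0 * (q.eval x * W x / x^2))) from
    funext (fun x => by rw [hpt x]; ring)]
  rw [intervalIntegral.integral_add (S.intS q _)
      (((S.int3 q).const_mul _).add ((S.int2 q).const_mul _)),
    intervalIntegral.integral_add ((S.int3 q).const_mul _) ((S.int2 q).const_mul _),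
    intervalIntegral.integral_const_mul, intervalIntegral.integral_const_mul]
  rw [add_assoc]
  rfl

end Setup

noncomputable def Pd (P : ℕ → ℝ → Polynomial ℝ) (k : ℕ) (t : ℝ) : Polynomial ℝ :=
  ∑ i ∈ Finset.range (k+1),
    Polynomial.C (deriv (fun s => (P k s).coeff i) t) * Polynomial.X^i

lemma Pd_coeff (P : ℕ → ℝ → Polynomial ℝ) (k : ℕ) (t : ℝ) (j : ℕ) :
    (Pd P k t).coeff j =
      if j ≤ k then deriv (fun s => (P k s).coeff j) t else 0 := by
  unfold Pd
  rw [Polynomial.finset_sum_coeff]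
  by_cases hj : j ≤ k
  · rw [if_pos hj, Finset.sum_eq_single j]
    · rw [Polynomial.coeff_C_mul, Polynomial.coeff_X_pow, if_pos rfl, mul_one]
    · intro i _ hij
      rw [Polynomial.coeff_C_mul, Polynomial.coeff_X_pow, if_neg (Ne.symm hij), mul_zero]
    · intro hmem
      exact absurd (Finset.mem_range.mpr (by omega)) hmem
  · rw [if_neg hj]
    apply Finset.sum_eq_zero
    intro i hi
    rw [Finset.mem_range] at hi
    rw [Polynomial.coeff_C_mul, Polynomial.coeff_X_pow, if_neg (by omega : ¬ j = i), mul_zero]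

lemma Pd_eval (P : ℕ → ℝ → Polynomial ℝ) (k : ℕ) (t : ℝ) (x : ℝ) :
    (Pd P k t).eval x =
      ∑ i ∈ Finset.range (k+1), deriv (fun s => (P k s).coeff i) t * x^i := by
  unfold Pd
  rw [Polynomial.eval_finset_sum]
  apply Finset.sum_congr rfl
  intro i _
  simp

lemma deriv_const_on {f : ℝ → ℝ} {c t : ℝ} (ht : 0 < t)
    (hf : ∀ s ∈ Set.Ioi (0:ℝ), f s = c) : deriv f t = 0 := by
  have heq : f =ᶠ[nhds t] fun _ => c :=
    Filter.eventually_of_mem (Ioi_mem_nhds ht) hf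
  rw [heq.deriv_eq]
  exact deriv_const t c

lemma hasDeriv_eval {P : ℕ → ℝ → Polynomial ℝ} {t : ℝ} (ht : 0 < t)
    (hcoeff : ∀ n i : ℕ, DifferentiableOn ℝ (fun s => (P n s).coeff i) (Set.Ioi 0))
    (hdeg : ∀ n : ℕ, ∀ s : ℝ, 0 < s → (P n s).natDegree = n)
    (k : ℕ) (x : ℝ) :
    HasDerivAt (fun s => (P k s).eval x) ((Pd P k t).eval x) t := by
  have hsum : HasDerivAt (fun s => ∑ i ∈ Finset.range (k+1), (P k s).coeff i * x^i)
      (∑ i ∈ Finset.range (k+1), deriv (fun s => (P k s).coeff i) t * x^i) t := by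
    apply HasDerivAt.fun_sum
    intro i _
    exact (((hcoeff k i) t (Set.mem_Ioi.mpr ht)).differentiableAt
      (Ioi_mem_nhds ht)).hasDerivAt.mul_const _
  have heq : (fun s => (P k s).eval x) =ᶠ[nhds t]
      fun s => ∑ i ∈ Finset.range (k+1), (P k s).coeff i * x^i := by
    apply Filter.eventually_of_mem (Ioi_mem_nhds ht)
    intro s hs
    exact Polynomial.eval_eq_sum_range' (by rw [hdeg k s hs]; omega) x
  rw [Pd_eval]
  exact heq.hasDerivAt_iff.mpr hsum

lemma hasDeriv_w {w : ℝ → ℝ → ℝ} {α t : ℝ}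
    (hw : ∀ s : ℝ, 0 < s → ∀ x : ℝ, x ≠ 0 →
      w s x = (1 - x ^ 2) ^ α * Real.exp (-s / x ^ 2))
    (ht : 0 < t) (x : ℝ) (hx : x ≠ 0) :
    HasDerivAt (fun s => w s x) (-(w t x) / x^2) t := by
  have hx2 : (0:ℝ) < x^2 := by positivity
  have h1 : HasDerivAt (fun s : ℝ => -s/x^2) (-1/x^2) t := by
    have h0 : HasDerivAt (fun s : ℝ => (-1/x^2) * s) ((-1/x^2) * 1) t :=
      (hasDerivAt_id t).const_mul (-1/x^2)
    have : (fun s : ℝ => (-1/x^2) * s) = fun s : ℝ => -s/x^2 := by funext s; ring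
    rw [this, mul_one] at h0
    exact h0
  have h2 := h1.exp
  have h3 := h2.const_mul ((1-x^2) ^ α)
  have heq : (fun s => w s x) =ᶠ[nhds t] fun s => (1-x^2) ^ α * Real.exp (-s/x^2) :=
    Filter.eventually_of_mem (Ioi_mem_nhds ht) fun s hs => hw s hs x hx
  have hval : -(w t x)/x^2 = (1-x^2) ^ α * (Real.exp (-t/x^2) * (-1/x^2)) := by
    rw [hw t ht x hx]
    field_simp
  rw [hval]
  exact heq.hasDerivAt_iff.mpr h3

section Main

variable {α : ℝ} {w : ℝ → ℝ → ℝ} {P : ℕ → ℝ → Polynomial ℝ} {h : ℕ → ℝ → ℝ}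

lemma mkSetup (hα : 0 < α)
    (hw : ∀ s : ℝ, 0 < s → ∀ x : ℝ, x ≠ 0 →
      w s x = (1 - x ^ 2) ^ α * Real.exp (-s / x ^ 2))
    (hw0 : ∀ s : ℝ, 0 < s → w s 0 = 0)
    (hmonic : ∀ n : ℕ, ∀ s : ℝ, 0 < s → (P n s).Monic)
    (hdeg : ∀ n : ℕ, ∀ s : ℝ, 0 < s → (P n s).natDegree = n)
    (hpos : ∀ n : ℕ, ∀ s : ℝ, 0 < s → 0 < h n s)
    (horth : ∀ s : ℝ, 0 < s → ∀ j k,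
      (∫ x in (-1:ℝ)..1, (P j s).eval x * (P k s).eval x * w s x)
        = if j = k then h j s else 0)
    (s : ℝ) (hs : 0 < s) :
    Setup α s (w s) (fun k => P k s) (fun k => h k s) :=
  ⟨hα, hs, fun x hx => hw s hs x hx, hw0 s hs, fun k => hmonic k s hs,
    fun k => hdeg k s hs, fun k => hpos k s hs, fun j k => horth s hs j k⟩

lemma deriv_orth_zero (hα : 0 < α)
    (hw : ∀ s : ℝ, 0 < s → ∀ x : ℝ, x ≠ 0 →
      w s x = (1 - x ^ 2) ^ α * Real.exp (-s / x ^ 2))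
    (hw0 : ∀ s : ℝ, 0 < s → w s 0 = 0)
    (hmonic : ∀ n : ℕ, ∀ s : ℝ, 0 < s → (P n s).Monic)
    (hdeg : ∀ n : ℕ, ∀ s : ℝ, 0 < s → (P n s).natDegree = n)
    (hpos : ∀ n : ℕ, ∀ s : ℝ, 0 < s → 0 < h n s)
    (horth : ∀ s : ℝ, 0 < s → ∀ j k,
      (∫ x in (-1:ℝ)..1, (P j s).eval x * (P k s).eval x * w s x)
        = if j = k then h j s else 0)
    (hcoeff : ∀ n i : ℕ, DifferentiableOn ℝ (fun s => (P n s).coeff i) (Set.Ioi 0))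
    (hswap : ∀ n m : ℕ, ∀ t : ℝ, 0 < t →
      HasDerivAt (fun s => ∫ x in (-1:ℝ)..1, (P n s).eval x * (P m s).eval x * w s x)
        (∫ x in (-1:ℝ)..1, deriv (fun s => (P n s).eval x * (P m s).eval x * w s x) t) t)
    (t : ℝ) (ht : 0 < t) (n m : ℕ) (hnm : n ≠ m) :
    Sint (w t) (Pd P n t) (P m t) + Sint (w t) (P n t) (Pd P m t)
      - Tint (w t) (P n t * P m t) = 0 := by
  have St := mkSetup hα hw hw0 hmonic hdeg hpos horth t ht
  have hzero : (∫ x in (-1:ℝ)..1,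
      deriv (fun s => (P n s).eval x * (P m s).eval x * w s x) t) = 0 := by
    have heq : (fun s => ∫ x in (-1:ℝ)..1, (P n s).eval x * (P m s).eval x * w s x)
        =ᶠ[nhds t] fun _ => (0:ℝ) := by
      apply Filter.eventually_of_mem (Ioi_mem_nhds ht)
      intro s hs
      show (∫ x in (-1:ℝ)..1, (P n s).eval x * (P m s).eval x * w s x) = (0:ℝ)
      rw [horth s hs n m, if_neg hnm]
    have hconst : HasDerivAt
        (fun s => ∫ x in (-1:ℝ)..1, (P n s).eval x * (P m s).eval x * w s x) 0 t :=
      heq.hasDerivAt_iff.mpr (hasDerivAt_const t 0)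
    exact (hswap n m t ht).unique hconst
  have hpt : ∀ x : ℝ, x ≠ 0 →
      deriv (fun s => (P n s).eval x * (P m s).eval x * w s x) t
      = (Pd P n t).eval x * (P m t).eval x * w t x
        + ((P n t).eval x * (Pd P m t).eval x * w t x
          - (P n t).eval x * (P m t).eval x * w t x / x^2) := by
    intro x hx
    have h1 := hasDeriv_eval ht hcoeff hdeg n x
    have h2 := hasDeriv_eval ht hcoeff hdeg m x
    have h3 := hasDeriv_w hw ht x hx
    have hfull := (h1.mul h2).mul h3
    rw [show (fun s => (P n s).eval x * (P m s).eval x * w s x) = (((fun s => (P n s).eval x) * fun s => (P m s).eval x) * fun s => w s x) from rfl, hfull.deriv, Pi.mul_apply]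
    ring
  have hcong : (∫ x in (-1:ℝ)..1,
      deriv (fun s => (P n s).eval x * (P m s).eval x * w s x) t)
      = ∫ x in (-1:ℝ)..1, ((Pd P n t).eval x * (P m t).eval x * w t x
        + ((P n t).eval x * (Pd P m t).eval x * w t x
          - (P n t).eval x * (P m t).eval x * w t x / x^2)) := by
    apply intervalIntegral.integral_congr_ae
    have hne : ∀ᵐ x : ℝ ∂volume, x ≠ 0 := by
      rw [ae_iff]
      convert Real.volume_singleton (a := (0:ℝ)) using 2
      ext y; simp
    filter_upwards [hne] with x hx _
    exact hpt x hx
  have hintT : IntervalIntegrable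
      (fun x => (P n t).eval x * (P m t).eval x * w t x / x^2) volume (-1) 1 :=
    St.intT (P n t) (P m t)
  have hsplit : (∫ x in (-1:ℝ)..1, ((Pd P n t).eval x * (P m t).eval x * w t x
        + ((P n t).eval x * (Pd P m t).eval x * w t x
          - (P n t).eval x * (P m t).eval x * w t x / x^2)))
      = Sint (w t) (Pd P n t) (P m t) + (Sint (w t) (P n t) (Pd P m t)
          - Tint (w t) (P n t * P m t)) := by
    rw [intervalIntegral.integral_add (St.intS (Pd P n t) (P m t))
      ((St.intS (P n t) (Pd P m t)).sub hintT),
      intervalIntegral.integral_sub (St.intS (P n t) (Pd P m t)) hintT]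
    have hT : Tint (w t) (P n t * P m t)
        = ∫ x in (-1:ℝ)..1, (P n t).eval x * (P m t).eval x * w t x / x^2 := by
      unfold Tint
      congr 1
      funext x
      rw [Polynomial.eval_mul]
    rw [hT]
    rfl
  have := hcong ▸ hzero
  rw [hsplit] at this
  linarith [this]

end Main

namespace Setup

variable {α t : ℝ} {W : ℝ → ℝ} {P : ℕ → Polynomial ℝ} {h : ℕ → ℝ}

lemma U_rec (S : Setup α t W P h) (k : ℕ) :
    (P k).coeff 0 * Uint W (P (k+1)) = h k + (P (k+1)).coeff 0 * Uint W (P k) := by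
  have h1 : Uint W (P (k+1) * P k)
      = Sint W (P (k+1)) (P k).divX + (P k).coeff 0 * Uint W (P (k+1)) := S.U_split _ _
  have h2 : Uint W (P k * P (k+1))
      = Sint W (P k) (P (k+1)).divX + (P (k+1)).coeff 0 * Uint W (P k) := S.U_split _ _
  have h3 : P (k+1) * P k = P k * P (k+1) := mul_comm _ _
  have h4 : Sint W (P (k+1)) (P k).divX = 0 := by
    rw [S_comm]
    apply S.orth_P (k+1)
    apply (Polynomial.degree_lt_iff_coeff_zero _ _).mpr
    intro j hj
    rw [Polynomial.coeff_divX]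
    exact Polynomial.coeff_eq_zero_of_natDegree_lt (by rw [S.hdeg]; omega)
  have h5 : Sint W (P k) (P (k+1)).divX = h k := by
    rw [S_comm]
    have hd : ((P (k+1)).divX).degree ≤ (k : WithBot ℕ) := by
      apply (Polynomial.degree_le_iff_coeff_zero _ _).mpr
      intro j hj
      have hjk : k < j := by exact_mod_cast hj
      rw [Polynomial.coeff_divX]
      exact Polynomial.coeff_eq_zero_of_natDegree_lt (by rw [S.hdeg]; omega)
    rw [S.S_eval k _ hd, Polynomial.coeff_divX, S.coeff_P_nd (k+1), one_mul]
  rw [h3] at h1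
  rw [h1, h4, h5] at h2
  linarith [h2]

lemma T_PP_split (S : Setup α t W P h) (m k : ℕ) (hmk : m ≤ k + 1) :
    Tint W (P k * P m) = (P m).coeff 1 * Uint W (P k)
      + (P m).coeff 0 * Tint W (P k) := by
  rw [S.T_split (P k) (P m)]
  have hz : Sint W (P k) ((P m).divX.divX) = 0 := by
    rw [S_comm]
    apply S.orth_P k
    apply (Polynomial.degree_lt_iff_coeff_zero _ _).mpr
    intro j hj
    rw [Polynomial.coeff_divX, Polynomial.coeff_divX]
    exact Polynomial.coeff_eq_zero_of_natDegree_lt (by rw [S.hdeg]; omega)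
  rw [hz, zero_add]

end Setup

lemma Pd_degree (P : ℕ → ℝ → Polynomial ℝ) (k : ℕ) (t : ℝ) :
    (Pd P k t).degree ≤ (k : WithBot ℕ) := by
  apply (Polynomial.degree_le_iff_coeff_zero _ _).mpr
  intro j hj
  have hkj : k < j := by exact_mod_cast hj
  rw [Pd_coeff, if_neg (by omega)]

section Main2

variable {α : ℝ} {w : ℝ → ℝ → ℝ} {P : ℕ → ℝ → Polynomial ℝ} {h : ℕ → ℝ → ℝ}

lemma key_A (hα : 0 < α)
    (hw : ∀ s : ℝ, 0 < s → ∀ x : ℝ, x ≠ 0 →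
      w s x = (1 - x ^ 2) ^ α * Real.exp (-s / x ^ 2))
    (hw0 : ∀ s : ℝ, 0 < s → w s 0 = 0)
    (hmonic : ∀ n : ℕ, ∀ s : ℝ, 0 < s → (P n s).Monic)
    (hdeg : ∀ n : ℕ, ∀ s : ℝ, 0 < s → (P n s).natDegree = n)
    (hpos : ∀ n : ℕ, ∀ s : ℝ, 0 < s → 0 < h n s)
    (horth : ∀ s : ℝ, 0 < s → ∀ j k,
      (∫ x in (-1:ℝ)..1, (P j s).eval x * (P k s).eval x * w s x)
        = if j = k then h j s else 0)
    (hcoeff : ∀ n i : ℕ, DifferentiableOn ℝ (fun s => (P n s).coeff i) (Set.Ioi 0))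
    (hswap : ∀ n m : ℕ, ∀ t : ℝ, 0 < t →
      HasDerivAt (fun s => ∫ x in (-1:ℝ)..1, (P n s).eval x * (P m s).eval x * w s x)
        (∫ x in (-1:ℝ)..1, deriv (fun s => (P n s).eval x * (P m s).eval x * w s x) t) t)
    (t : ℝ) (ht : 0 < t) (m : ℕ) :
    deriv (fun s => (P (m+2) s).coeff m) t * h m t
      = Tint (w t) (P (m+2) t * P m t) := by
  have St := mkSetup hα hw hw0 hmonic hdeg hpos horth t ht
  have hdz := deriv_orth_zero hα hw hw0 hmonic hdeg hpos horth hcoeff hswap t ht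
    (m+2) m (by omega)
  have hPddeg : (Pd P (m+2) t).degree ≤ (m : WithBot ℕ) := by
    apply (Polynomial.degree_le_iff_coeff_zero _ _).mpr
    intro j hj
    have hmj : m < j := by exact_mod_cast hj
    rw [Pd_coeff]
    by_cases hj2 : j ≤ m + 2
    · rw [if_pos hj2]
      rcases (by omega : j = m + 1 ∨ j = m + 2) with rfl | rfl
      · apply deriv_const_on ht
        intro s hs
        exact (mkSetup hα hw hw0 hmonic hdeg hpos horth s hs).parity (m+2) (m+1) (by omega)
      · apply deriv_const_on ht
        intro s hs
        exact (mkSetup hα hw hw0 hmonic hdeg hpos horth s hs).coeff_P_nd (m+2)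
    · rw [if_neg hj2]
  have hS1 : Sint (w t) (Pd P (m+2) t) (P m t)
      = (Pd P (m+2) t).coeff m * h m t :=
    St.S_eval m _ hPddeg
  have hS1c : (Pd P (m+2) t).coeff m = deriv (fun s => (P (m+2) s).coeff m) t := by
    rw [Pd_coeff, if_pos (by omega)]
  have hS2 : Sint (w t) (P (m+2) t) (Pd P m t) = 0 := by
    rw [Setup.S_comm]
    exact St.orth_P (m+2) _ (lt_of_le_of_lt (Pd_degree P m t) (by exact_mod_cast by omega : (m : WithBot ℕ) < ((m+2 : ℕ) : WithBot ℕ)))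
  rw [hS1, hS1c, hS2] at hdz
  linarith [hdz]

end Main2



theorem stmt_12
    (α : ℝ) (hα : 0 < α)
    (w : ℝ → ℝ → ℝ)
    (hw : ∀ t : ℝ, 0 < t → ∀ x : ℝ, x ≠ 0 →
      w t x = (1 - x ^ 2) ^ α * Real.exp (-t / x ^ 2))
    (hw0 : ∀ t : ℝ, 0 < t → w t 0 = 0)
    (P : ℕ → ℝ → Polynomial ℝ)
    (hmonic : ∀ n : ℕ, ∀ t : ℝ, 0 < t → (P n t).Monic)
    (hdeg : ∀ n : ℕ, ∀ t : ℝ, 0 < t → (P n t).natDegree = n)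
    (h : ℕ → ℝ → ℝ)
    (hpos : ∀ n : ℕ, ∀ t : ℝ, 0 < t → 0 < h n t)
    (horth : ∀ t : ℝ, 0 < t → ∀ j k,
      (∫ x in (-1:ℝ)..1, (P j t).eval x * (P k t).eval x * w t x)
        = if j = k then h j t else 0)
    (hcoeff : ∀ n i : ℕ, DifferentiableOn ℝ (fun s => (P n s).coeff i) (Set.Ioi 0))
    (hswap : ∀ n m : ℕ, ∀ t : ℝ, 0 < t →
      HasDerivAt (fun s => ∫ x in (-1:ℝ)..1, (P n s).eval x * (P m s).eval x * w s x)
        (∫ x in (-1:ℝ)..1, deriv (fun s => (P n s).eval x * (P m s).eval x * w s x) t) t)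
    (R : ℕ → ℝ → ℝ)
    (hR : ∀ n : ℕ, ∀ t : ℝ, 0 < t → R n t = 2 * t / h n t *
      ∫ y in (-1:ℝ)..1, ((P n t).eval y) ^ 2 * w t y / y ^ 2)
    (β : ℕ → ℝ → ℝ)
    (hβ : ∀ n : ℕ, 1 ≤ n → ∀ t : ℝ, 0 < t → β n t = h n t / h (n - 1) t)
    (p : ℕ → ℝ → ℝ) (hp1 : ∀ t : ℝ, p 1 t = 0)
    (hp : ∀ n : ℕ, 2 ≤ n → ∀ t : ℝ, p n t = (P n t).coeff (n - 2))
    :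
    ∀ n : ℕ, 1 ≤ n → ∀ t : ℝ, 0 < t →
      DifferentiableAt ℝ (p n) t ∧
      2 * t * deriv (p n) t = (1 - (-1 : ℝ) ^ n) * t - β n t * R n t := by
  intro n hn t ht
  have St : Setup α t (w t) (fun k => P k t) (fun k => h k t) :=
    mkSetup hα hw hw0 hmonic hdeg hpos horth t ht
  have hm1 : h (n-1) t ≠ 0 := (hpos (n-1) t ht).ne'
  have hn0 : h n t ≠ 0 := (hpos n t ht).ne'
  have hInt : (∫ y in (-1:ℝ)..1, ((P n t).eval y) ^ 2 * w t y / y ^ 2)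
      = Tint (w t) (P n t * P n t) := by
    unfold Tint
    congr 1
    funext y
    rw [Polynomial.eval_mul]
    ring
  rcases eq_or_lt_of_le hn with hn1 | hn2
  · -- n = 1
    subst hn1
    have hp1' : p 1 = fun _ => (0:ℝ) := funext hp1
    constructor
    · rw [hp1']
      exact differentiableAt_const 0
    · rw [hp1', deriv_const]
      -- compute Tint (w t) (P 1 t * P 1 t) = h 0 t
      have hP1 : P 1 t = Polynomial.X := St.P_one
      have hP0 : P 0 t = (1 : Polynomial ℝ) := St.P_zero
      have hdivX : (Polynomial.X : Polynomial ℝ).divX = 1 := by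
        ext j
        rw [Polynomial.coeff_divX, Polynomial.coeff_one]
        rcases Nat.eq_zero_or_pos j with rfl | hj
        · simp
        · rw [Polynomial.coeff_X, if_neg (by omega), if_neg (by omega)]
      have hTXX : Tint (w t) (Polynomial.X * Polynomial.X) = h 0 t := by
        have hts := St.T_split Polynomial.X Polynomial.X
        rw [hdivX, Polynomial.divX_one] at hts
        have hz : Sint (w t) Polynomial.X (0 : Polynomial ℝ) = 0 := by
          rw [Setup.S_comm]
          exact Setup.S_zero_left _
        rw [hz, Polynomial.coeff_X_one, Polynomial.coeff_X_zero] at hts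
        have hus := St.U_split 1 Polynomial.X
        rw [hdivX, one_mul, Polynomial.coeff_X_zero] at hus
        have hS11 : Sint (w t) 1 1 = h 0 t := by
          have := St.horth 0 0
          rw [if_pos rfl] at this
          rw [show (1 : Polynomial ℝ) = P 0 t from hP0.symm]
          exact this
        rw [hts, hus, hS11]
        ring
      have hT : Tint (w t) (P 1 t * P 1 t) = h 0 t := by rw [hP1]; exact hTXX
      rw [hβ 1 (le_refl 1) t ht, hR 1 t ht, hInt, hT]
      have h00 : h 0 t ≠ 0 := (hpos 0 t ht).ne'
      have h10 : h 1 t ≠ 0 := (hpos 1 t ht).ne'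
      field_simp
      ring
  · -- n ≥ 2
    obtain ⟨m, rfl⟩ : ∃ m, n = m + 2 := ⟨n - 2, by omega⟩
    have hsub : m + 2 - 2 = m := by omega
    have hpn : p (m+2) = fun s => (P (m+2) s).coeff m := by
      funext s
      rw [hp (m+2) (by omega) s, hsub]
    have hdiff : DifferentiableAt ℝ (p (m+2)) t := by
      rw [hpn]
      exact (hcoeff (m+2) m).differentiableAt (Ioi_mem_nhds ht)
    refine ⟨hdiff, ?_⟩
    set dp := deriv (p (m+2)) t with hdp
    have hdp' : dp = deriv (fun s => (P (m+2) s).coeff m) t := by rw [hdp, hpn]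
    -- key identity (A)
    have hA : deriv (fun s => (P (m+2) s).coeff m) t * h m t
        = Tint (w t) (P (m+2) t * P m t) :=
      key_A hα hw hw0 hmonic hdeg hpos horth hcoeff hswap t ht m
    -- splits
    have hTsplit : Tint (w t) (P (m+2) t * P m t)
        = (P m t).coeff 1 * Uint (w t) (P (m+2) t)
          + (P m t).coeff 0 * Tint (w t) (P (m+2) t) :=
      St.T_PP_split m (m+2) (by omega)
    have hTself : Tint (w t) (P (m+2) t * P (m+2) t)
        = (P (m+2) t).coeff 1 * Uint (w t) (P (m+2) t)
          + (P (m+2) t).coeff 0 * Tint (w t) (P (m+2) t) :=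
      St.T_PP_split (m+2) (m+2) (by omega)
    -- recurrence coefficients
    have hrec : h m t • (Polynomial.X * P (m+1) t)
        = h m t • P (m+2) t + h (m+1) t • P m t := St.recur m
    have hRC0 : 0 = h m t * (P (m+2) t).coeff 0 + h (m+1) t * (P m t).coeff 0 := by
      have := congrArg (fun q => Polynomial.coeff q 0) hrec
      simp only [Polynomial.coeff_smul, Polynomial.coeff_add, smul_eq_mul,
        Polynomial.mul_coeff_zero, Polynomial.coeff_X_zero, zero_mul, mul_zero] at this
      linarith [this]
    have hRC1 : h m t * (P (m+1) t).coeff 0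
        = h m t * (P (m+2) t).coeff 1 + h (m+1) t * (P m t).coeff 1 := by
      have := congrArg (fun q => Polynomial.coeff q 1) hrec
      simp only [Polynomial.coeff_smul, Polynomial.coeff_add, smul_eq_mul] at this
      rw [show (1:ℕ) = 0 + 1 from rfl, Polynomial.coeff_X_mul] at this
      exact this
    set Tn := Tint (w t) (P (m+2) t) with hTn
    set Un := Uint (w t) (P (m+2) t) with hUn
    set Tnn := Tint (w t) (P (m+2) t * P (m+2) t) with hTnn
    have hgoalrw : β (m+2) t * R (m+2) t = h (m+2) t / h (m+1) t * (2 * t / h (m+2) t * Tnn) := by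
      rw [hβ (m+2) (by omega) t ht, hR (m+2) t ht, hInt]
      norm_num
    rcases Nat.even_or_odd m with hme | hmo
    · -- n even
      have hm2 : m % 2 = 0 := Nat.even_iff.mp hme
      have hc1n : (P (m+2) t).coeff 1 = 0 := St.parity (m+2) 1 (by omega)
      have hc1m : (P m t).coeff 1 = 0 := St.parity m 1 (by omega)
      have hpow : ((-1 : ℝ)) ^ (m+2) = 1 := Even.neg_one_pow (by
        rcases hme with ⟨k, hk⟩
        exact ⟨k+1, by omega⟩)
      have e1 : dp * h m t = (P m t).coeff 0 * Tn := by
        rw [hdp', hA, hTsplit, hc1m]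
        ring
      have e2 : Tnn = (P (m+2) t).coeff 0 * Tn := by
        rw [hTself, hc1n]
        ring
      have hm0 : h m t ≠ 0 := (hpos m t ht).ne'
      have hm10 : h (m+1) t ≠ 0 := (hpos (m+1) t ht).ne'
      have e4 : h m t * (dp * h (m+1) t) = h m t * (-Tnn) := by
        calc h m t * (dp * h (m+1) t) = (dp * h m t) * h (m+1) t := by ring
          _ = ((P m t).coeff 0 * Tn) * h (m+1) t := by rw [e1]
          _ = (h (m+1) t * (P m t).coeff 0) * Tn := by ring
          _ = (-(h m t * (P (m+2) t).coeff 0)) * Tn := by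
              have : h (m+1) t * (P m t).coeff 0 = -(h m t * (P (m+2) t).coeff 0) := by
                linarith [hRC0]
              rw [this]
          _ = h m t * (-((P (m+2) t).coeff 0 * Tn)) := by ring
          _ = h m t * (-Tnn) := by rw [← e2]
      have e5 : dp * h (m+1) t = -Tnn := mul_left_cancel₀ hm0 e4
      rw [hgoalrw, hpow]
      have hn20 : h (m+2) t ≠ 0 := (hpos (m+2) t ht).ne'
      field_simp
      linear_combination 2 * e5
    · -- n odd
      have hm2 : m % 2 = 1 := Nat.odd_iff.mp hmo
      have hc0n : (P (m+2) t).coeff 0 = 0 := St.parity (m+2) 0 (by omega)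
      have hc0m : (P m t).coeff 0 = 0 := St.parity m 0 (by omega)
      have hpow : ((-1 : ℝ)) ^ (m+2) = -1 := Odd.neg_one_pow (by
        rcases hmo with ⟨k, hk⟩
        exact ⟨k+1, by omega⟩)
      have e1 : dp * h m t = (P m t).coeff 1 * Un := by
        rw [hdp', hA, hTsplit, hc0m]
        ring
      have e2 : Tnn = (P (m+2) t).coeff 1 * Un := by
        rw [hTself, hc0n]
        ring
      have eU : (P (m+1) t).coeff 0 * Un = h (m+1) t := by
        have eU0 : (P (m+1) t).coeff 0 * Uint (w t) (P (m+2) t)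
            = h (m+1) t + (P (m+2) t).coeff 0 * Uint (w t) (P (m+1) t) := St.U_rec (m+1)
        rw [hc0n, zero_mul, add_zero] at eU0
        rw [hUn]
        exact eU0
      have hm0 : h m t ≠ 0 := (hpos m t ht).ne'
      have hm10 : h (m+1) t ≠ 0 := (hpos (m+1) t ht).ne'
      have e4 : h m t * (dp * h (m+1) t) = h m t * (h (m+1) t - Tnn) := by
        calc h m t * (dp * h (m+1) t) = (dp * h m t) * h (m+1) t := by ring
          _ = ((P m t).coeff 1 * Un) * h (m+1) t := by rw [e1]
          _ = (h (m+1) t * (P m t).coeff 1) * Un := by ring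
          _ = (h m t * (P (m+1) t).coeff 0 - h m t * (P (m+2) t).coeff 1) * Un := by
              have : h (m+1) t * (P m t).coeff 1
                  = h m t * (P (m+1) t).coeff 0 - h m t * (P (m+2) t).coeff 1 := by
                linarith [hRC1]
              rw [this]
          _ = h m t * ((P (m+1) t).coeff 0 * Un) - h m t * ((P (m+2) t).coeff 1 * Un) := by
              ring
          _ = h m t * (h (m+1) t) - h m t * Tnn := by rw [eU, ← e2]
          _ = h m t * (h (m+1) t - Tnn) := by ring
      have e5 : dp * h (m+1) t = h (m+1) t - Tnn := mul_left_cancel₀ hm0 e4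
      rw [hgoalrw, hpow]
      have hn20 : h (m+2) t ≠ 0 := (hpos (m+2) t ht).ne'
      field_simp
      linear_combination 2 * e5
end

section
/- Let D_n(t) := det(∫_{-1}^{1} x^{j+k}·(1-x^2)^α·exp(-t/x^2) dx)_{j,k=0}^{n-1} and, for parameters a and b, let D̃_n(t,a,b) := det(∫_0^1 x^{i+j}·x^a·(1-x)^b·exp(-t/x) dx)_{i,j=0}^{n-1}. Then for every n ≥ 0: D_{2n}(t) = D̃_n(t, 1/2, α)·D̃_n(t, -1/2, α) and D_{2n+1}(t) = D̃_n(t, 1/2, α)·D̃_{n+1}(t, -1/2, α). -/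
/-!
The weight is even, so all odd moments `μ k` vanish. Listing the even indices before the odd ones
turns the Hankel matrix `(μ (j + k))` into a block-diagonal matrix whose blocks are the Hankel
matrices of `μ (2k)` and `μ (2k + 2)`. The substitution `u = x²` identifies `μ (2k)` with the
`k`-th moment of `u^(-1/2) (1 - u)^α exp(-t/u)` on `[0, 1]`, and `μ (2k + 2)` with that of
`u^(1/2) (1 - u)^α exp(-t/u)`.
-/

open MeasureTheory Set

namespace Function

variable {f : ℝ → ℝ}

theorem Odd.intervalIntegral_neg_eq_zero (hf : f.Odd) (a : ℝ) : ∫ x in -a..a, f x = 0 := by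
  have h := intervalIntegral.integral_comp_neg (a := -a) (b := a) f
  simp only [neg_neg, hf.eq, intervalIntegral.integral_neg] at h
  linarith

theorem Even.intervalIntegral_neg_eq_two_mul (hf : f.Even) {a : ℝ}
    (hi : IntervalIntegrable f volume 0 a) :
    ∫ x in -a..a, f x = 2 * ∫ x in 0..a, f x := by
  have hreflect : ∫ x in -a..0, f x = ∫ x in 0..a, f x := by
    simpa only [hf.eq, neg_zero] using
      (intervalIntegral.integral_comp_neg (a := 0) (b := a) f).symm
  have hi' : IntervalIntegrable f volume (-a) 0 := by
    simpa only [hf.eq, neg_zero] using (IntervalIntegrable.iff_comp_neg).mp hi.symm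
  rw [← intervalIntegral.integral_add_adjacent_intervals hi' hi, hreflect]
  ring

end Function

def Fin.evenOddEquiv {m n N : ℕ} (h : m + n = N) (hmn : m = n ∨ m = n + 1) :
    Fin m ⊕ Fin n ≃ Fin N where
  toFun := Sum.elim (fun j => ⟨2 * j, by omega⟩) (fun j => ⟨2 * j + 1, by omega⟩)
  invFun i :=
    if hi : i.1 % 2 = 0 then Sum.inl ⟨i / 2, by have := i.isLt; omega⟩
    else Sum.inr ⟨i / 2, by have := i.isLt; omega⟩
  left_inv := by
    rintro (⟨j, hj⟩ | ⟨j, hj⟩) <;> simp [Nat.mul_add_div]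
  right_inv := by
    rintro ⟨i, hi⟩
    by_cases hi2 : i % 2 = 0 <;>
      simp only [hi2, ↓reduceDIte, Sum.elim_inl, Sum.elim_inr, Fin.mk.injEq] <;> omega

namespace Matrix

variable {R : Type*}

def hankel (μ : ℕ → R) (n : ℕ) : Matrix (Fin n) (Fin n) R :=
  of fun i j => μ (i + j)

variable [CommRing R]

theorem det_hankel_of_odd_eq_zero {μ : ℕ → R} (hμ : ∀ k, Odd k → μ k = 0) {m n N : ℕ}
    (h : m + n = N) (hmn : m = n ∨ m = n + 1) :
    (hankel μ N).det
      = (hankel (fun k => μ (2 * k)) m).det * (hankel (fun k => μ (2 * k + 2)) n).det := by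
  rw [← det_submatrix_equiv_self (Fin.evenOddEquiv h hmn)]
  convert det_fromBlocks_zero₂₁ _ (0 : Matrix (Fin m) (Fin n) R) _ using 2
  ext (i | i) (j | j) <;>
    simp only [hankel, Fin.evenOddEquiv, Equiv.coe_fn_mk, submatrix_apply, Sum.elim_inl,
      Sum.elim_inr, of_apply, fromBlocks_apply₁₁, fromBlocks_apply₁₂, fromBlocks_apply₂₁,
      fromBlocks_apply₂₂, zero_apply]
  · congr 1; ring
  · exact hμ _ ⟨i + j, by ring⟩
  · exact hμ _ ⟨i + j, by ring⟩
  · congr 1; ring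

end Matrix

namespace PerturbedJacobi

variable {α t : ℝ}

theorem abs_integrand_le_one (hα : 0 ≤ α) (ht : 0 ≤ t) (k : ℕ) {x : ℝ} (hx : |x| ≤ 1) :
    |x ^ k * (1 - x ^ 2) ^ α * Real.exp (-t / x ^ 2)| ≤ 1 := by
  have hx2 : x ^ 2 ≤ 1 := by simpa using sq_le_sq' (abs_le.mp hx).1 (abs_le.mp hx).2
  rw [abs_mul, abs_mul, abs_pow, abs_of_nonneg (Real.rpow_nonneg (by linarith) _),
    Real.abs_exp]
  refine mul_le_one₀ (mul_le_one₀ (pow_le_one₀ (abs_nonneg x) hx) (by positivity)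
    (Real.rpow_le_one (by linarith) (by linarith [sq_nonneg x]) hα)) (by positivity) ?_
  exact Real.exp_le_one_iff.mpr (div_nonpos_of_nonpos_of_nonneg (neg_nonpos.mpr ht) (sq_nonneg x))

-- Since `-t / 0 = 0`, the integrand is `1` rather than `0` at `x = 0`, hence not continuous there.
theorem intervalIntegrable_integrand (hα : 0 ≤ α) (ht : 0 ≤ t) (k : ℕ) :
    IntervalIntegrable (fun x => x ^ k * (1 - x ^ 2) ^ α * Real.exp (-t / x ^ 2)) volume 0 1 := by
  refine (intervalIntegrable_iff_integrableOn_Ioc_of_le zero_le_one).mpr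
    (Measure.integrableOn_of_bounded (M := 1) measure_Ioc_lt_top.ne (by fun_prop) ?_)
  refine ae_restrict_of_forall_mem measurableSet_Ioc fun x hx => ?_
  exact abs_integrand_le_one hα ht k (abs_le.mpr ⟨by linarith [hx.1], hx.2⟩)

theorem integral_integrand_of_odd {k : ℕ} (hk : Odd k) :
    ∫ x in (-1 : ℝ)..1, x ^ k * (1 - x ^ 2) ^ α * Real.exp (-t / x ^ 2) = 0 := by
  refine Function.Odd.intervalIntegral_neg_eq_zero (fun x => ?_) 1
  simp only [hk.neg_pow, neg_sq, neg_mul]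

theorem integral_integrand_two_mul (hα : 0 ≤ α) (ht : 0 ≤ t) (k : ℕ) :
    ∫ x in (-1 : ℝ)..1, x ^ (2 * k) * (1 - x ^ 2) ^ α * Real.exp (-t / x ^ 2)
      = ∫ u in (0 : ℝ)..1, u ^ k * u ^ (-(1 / 2) : ℝ) * (1 - u) ^ α * Real.exp (-t / u) := by
  have heven : Function.Even fun x : ℝ => x ^ (2 * k) * (1 - x ^ 2) ^ α * Real.exp (-t / x ^ 2) :=
    fun x => by simp only [pow_mul, neg_sq]
  have hsubst : ∫ x in (0 : ℝ)..1,
        (x ^ 2) ^ k * (x ^ 2) ^ (-(1 / 2) : ℝ) * (1 - x ^ 2) ^ α * Real.exp (-t / x ^ 2) * (2 * x)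
      = ∫ u in (0 : ℝ)..1, u ^ k * u ^ (-(1 / 2) : ℝ) * (1 - u) ^ α * Real.exp (-t / u) := by
    simpa using intervalIntegral.integral_comp_mul_deriv_of_deriv_nonneg (a := 0) (b := 1)
      (f := fun x => x ^ 2) (f' := fun x => 2 * x)
      (g := fun u => u ^ k * u ^ (-(1 / 2) : ℝ) * (1 - u) ^ α * Real.exp (-t / u))
      (continuousOn_pow 2) (fun x _ => by simpa using hasDerivAt_pow 2 x)
      (fun x hx => by rw [min_eq_left zero_le_one] at hx; linarith [hx.1])
  rw [heven.intervalIntegral_neg_eq_two_mul (intervalIntegrable_integrand hα ht _),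
    ← intervalIntegral.integral_const_mul, ← hsubst]
  -- the integrands agree on `(0, 1]`, but not at `x = 0` when `k = 0`
  refine intervalIntegral.integral_congr_ae (ae_of_all _ fun x hx => ?_)
  rw [uIoc_of_le zero_le_one] at hx
  have hsqrt : (x ^ 2) ^ (-(1 / 2) : ℝ) = x⁻¹ := by
    rw [Real.rpow_neg (sq_nonneg x), ← Real.sqrt_eq_rpow, Real.sqrt_sq hx.1.le]
  simp only [hsqrt, ← pow_mul]
  field_simp [hx.1.ne']

theorem integral_integrand_two_mul_add_two (hα : 0 ≤ α) (ht : 0 ≤ t) (k : ℕ) :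
    ∫ x in (-1 : ℝ)..1, x ^ (2 * k + 2) * (1 - x ^ 2) ^ α * Real.exp (-t / x ^ 2)
      = ∫ u in (0 : ℝ)..1, u ^ k * u ^ (1 / 2 : ℝ) * (1 - u) ^ α * Real.exp (-t / u) := by
  rw [show 2 * k + 2 = 2 * (k + 1) by ring, integral_integrand_two_mul hα ht]
  refine intervalIntegral.integral_congr fun u hu => ?_
  have hu : 0 ≤ u := by simpa using hu.1
  have hhalf : u ^ (1 / 2 : ℝ) = u * u ^ (-(1 / 2) : ℝ) := by
    rw [← Real.rpow_one_add' hu (by norm_num)]; norm_num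
  simp only [hhalf, pow_succ, mul_assoc]

end PerturbedJacobi

open Matrix PerturbedJacobi in
theorem stmt_19
    (α t : ℝ) (hα : 0 < α) (ht : 0 < t)
    (D : ℕ → ℝ)
    (hD : ∀ n : ℕ, D n = (Matrix.of fun j k : Fin n =>
      ∫ x in (-1:ℝ)..1,
        x ^ ((j : ℕ) + (k : ℕ)) * (1 - x ^ 2) ^ α * Real.exp (-t / x ^ 2)).det)
    (Dt : ℕ → ℝ → ℝ → ℝ)
    (hDt : ∀ n : ℕ, ∀ a b : ℝ, Dt n a b = (Matrix.of fun i j : Fin n =>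
      ∫ x in (0:ℝ)..1,
        x ^ ((i : ℕ) + (j : ℕ)) * x ^ a * (1 - x) ^ b * Real.exp (-t / x)).det) :
    ∀ n : ℕ,
      D (2 * n) = Dt n (1/2) α * Dt n (-(1/2)) α ∧
      D (2 * n + 1) = Dt n (1/2) α * Dt (n + 1) (-(1/2)) α := by
  intro n
  let μ (k : ℕ) : ℝ := ∫ x in (-1:ℝ)..1, x ^ k * (1 - x ^ 2) ^ α * Real.exp (-t / x ^ 2)
  let ν (a : ℝ) (k : ℕ) : ℝ := ∫ u in (0:ℝ)..1, u ^ k * u ^ a * (1 - u) ^ α * Real.exp (-t / u)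
  have hDμ (N : ℕ) : D N = (hankel μ N).det := hD N
  have hDtν (N : ℕ) (a : ℝ) : Dt N a α = (hankel (ν a) N).det := hDt N a α
  have hodd (k : ℕ) (hk : Odd k) : μ k = 0 := integral_integrand_of_odd hk
  have hμ_even : (fun k => μ (2 * k)) = ν (-(1 / 2)) :=
    funext (integral_integrand_two_mul hα.le ht.le)
  have hμ_even_succ : (fun k => μ (2 * k + 2)) = ν (1 / 2) :=
    funext (integral_integrand_two_mul_add_two hα.le ht.le)
  constructor
  · rw [hDμ, det_hankel_of_odd_eq_zero hodd (two_mul n).symm (.inl rfl), hμ_even, hμ_even_succ,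
      hDtν, hDtν, mul_comm]
  · rw [hDμ, det_hankel_of_odd_eq_zero hodd (by ring) (.inr rfl), hμ_even, hμ_even_succ,
      hDtν, hDtν, mul_comm]
end
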